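/- arXiv:2510.03581 — 7 statements merged into one kernel-verified Lean document; each statement's English description precedes it below -/
import Mathlib

section
/- Let T be an ω₁-tree such that ψ(T,F) holds for every predense family F of subtrees of T. Then T is saturated. -/
noncomputable section

/-- The first uncountable ordinal. -/
def omega1 : Ordinal := (Cardinal.aleph 1).ord

open scoped Classical in
/-- The height of an element of a tree: the order type of its set of strict
predecessors (`0` if that set is not well-ordered). -/
noncomputable def treeHeight {α : Type} [PartialOrder α] (t : α) : Ordinal :=
  if h : IsWellOrder {s : α // s < t} (fun a b => a.1 < b.1) then
    @Ordinal.type {s : α // s < t} (fun a b => a.1 < b.1) h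
  else 0

/-- An ω₁-tree: a partial order in which the strict predecessors of every element are
well-ordered, of height ω₁, all of whose levels are countable. -/
def IsOmega1Tree (α : Type) [PartialOrder α] : Prop :=
  (∀ t : α, IsWellOrder {s : α // s < t} (fun a b => a.1 < b.1)) ∧
  (∀ t : α, treeHeight t < omega1) ∧
  (∀ β : Ordinal, β < omega1 → ∃ t : α, treeHeight t = β) ∧
  (∀ β : Ordinal, {t : α | treeHeight t = β}.Countable)

/-- A subtree: an uncountable downward-closed subset. -/
def IsSubtree {α : Type} [PartialOrder α] (S : Set α) : Prop :=
  ¬S.Countable ∧ ∀ s t : α, s ≤ t → t ∈ S → s ∈ S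

/-- A family of subtrees. -/
def SubtreeFamily {α : Type} [PartialOrder α] (F : Set (Set α)) : Prop :=
  ∀ S ∈ F, IsSubtree S

/-- `perp F` is the set of subtrees almost disjoint from every member of `F`. -/
def perp {α : Type} [PartialOrder α] (F : Set (Set α)) : Set (Set α) :=
  {S | IsSubtree S ∧ ∀ W ∈ F, (S ∩ W).Countable}

/-- A family of subtrees is predense if every subtree has uncountable intersection
with some member of the family. -/
def Predense {α : Type} [PartialOrder α] (F : Set (Set α)) : Prop :=
  ∀ S : Set α, IsSubtree S → ∃ W ∈ F, ¬(S ∩ W).Countable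

/-- A tree is saturated if every antichain of subtrees (pairwise almost disjoint
family of subtrees) has cardinality less than ω₂. -/
def Saturated (α : Type) [PartialOrder α] : Prop :=
  ∀ F : Set (Set α), SubtreeFamily F →
    (∀ S ∈ F, ∀ W ∈ F, S ≠ W → (S ∩ W).Countable) →
    Cardinal.mk ↥F < Cardinal.aleph 2

/-- `C` is club in `lam`: a subset of `lam` which is unbounded in `lam` and closed,
i.e. contains every nonzero ordinal below `lam` which is a limit of members of `C`. -/
def IsClubIn (C : Set Ordinal) (lam : Ordinal) : Prop :=
  C ⊆ Set.Iio lam ∧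
  (∀ β < lam, ∃ γ ∈ C, β ≤ γ) ∧
  (∀ β < lam, β ≠ 0 → (∀ x < β, ∃ γ ∈ C, x < γ ∧ γ < β) → β ∈ C)

/-- The statement φ(T,F). -/
def Phi {α : Type} [PartialOrder α] (F : Set (Set α)) : Prop :=
  ∃ U : Ordinal → Set α, ∃ C : Set Ordinal,
    (∀ ξ < omega1, IsSubtree (U ξ)) ∧ IsClubIn C omega1 ∧
    ∀ a ∈ C, ∀ t : α, treeHeight t = a →
      ((∃ ξ < a, t ∈ U ξ ∧ U ξ ∈ perp F) ∨
       (∃ b < a, ∀ ν ∈ C, b < ν → ν < a →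
          ∃ ξ < ν, U ξ ∈ F ∧ ∃ s : α, treeHeight s = ν ∧ s ≤ t ∧ s ∈ U ξ))

/-- The statement ψ(T,F): φ(T,F) with the first alternative omitted. -/
def Psi {α : Type} [PartialOrder α] (F : Set (Set α)) : Prop :=
  ∃ U : Ordinal → Set α, ∃ C : Set Ordinal,
    (∀ ξ < omega1, IsSubtree (U ξ)) ∧ IsClubIn C omega1 ∧
    ∀ a ∈ C, ∀ t : α, treeHeight t = a →
      ∃ b < a, ∀ ν ∈ C, b < ν → ν < a →
        ∃ ξ < ν, U ξ ∈ F ∧ ∃ s : α, treeHeight s = ν ∧ s ≤ t ∧ s ∈ U ξ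

/-- An Aronszajn tree: an ω₁-tree with no uncountable chain. -/
def IsAronszajnTree (α : Type) [PartialOrder α] : Prop :=
  IsOmega1Tree α ∧ ∀ c : Set α, IsChain (· ≤ ·) c → c.Countable


section Aux

open Cardinal Ordinal Set

lemma omega1_isLimit : Order.IsSuccLimit omega1.{0} := Cardinal.isSuccLimit_ord (Cardinal.aleph0_le_aleph 1)

lemma omega1_pos : (0 : Ordinal) < omega1.{0} := omega1_isLimit.pos

lemma cof_omega1 : omega1.{0}.cof = Cardinal.aleph 1 :=
  Cardinal.isRegular_aleph_one.cof_eq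

lemma omega1_card : omega1.{0}.card = Cardinal.aleph 1 :=
  Cardinal.card_ord _

lemma lt_add_one_ordinal (b : Ordinal.{0}) : b < b + 1 := by
  rw [Ordinal.add_one_eq_succ]; exact Order.lt_succ b

lemma succ_lt_omega1 {b : Ordinal.{0}} (h : b < omega1) : b + 1 < omega1 := by
  rw [Ordinal.add_one_eq_succ]; exact omega1_isLimit.succ_lt h

lemma sup_lt_omega1 {f : ℕ → Ordinal.{0}} (hf : ∀ n, f n < omega1) :
    iSup f < omega1 := by
  refine Ordinal.iSup_lt_ord (a := omega1) ?_ hf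
  rw [cof_omega1, Cardinal.mk_nat]
  exact Cardinal.aleph0_lt_aleph_one

lemma ordinal_Iio_countable {d : Ordinal.{0}} (hd : d < omega1) : (Set.Iio d).Countable := by
  rw [Cardinal.countable_iff_lt_aleph_one, Ordinal.mk_Iio_ordinal]
  have h2 : Cardinal.lift.{1} d.card < Cardinal.lift.{1} (Cardinal.aleph 1) :=
    Cardinal.lift_lt.mpr (Cardinal.lt_ord.mp hd)
  rwa [Cardinal.lift_aleph, Ordinal.lift_one] at h2

lemma bound_of_countable {α : Type} [PartialOrder α] (hT : IsOmega1Tree α)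
    {S : Set α} (hS : S.Countable) : ∃ δ, δ < omega1 ∧ ∀ s ∈ S, treeHeight s < δ := by
  have hmk : Cardinal.mk ↥S ≤ Cardinal.aleph0 :=
    Cardinal.mk_le_aleph0_iff.mpr (Set.countable_coe_iff.mpr hS)
  have hsup : iSup (fun s : ↥S => treeHeight s.1) < omega1 := by
    refine Ordinal.iSup_lt_ord (a := omega1) ?_ (fun s => hT.2.1 s.1)
    rw [cof_omega1]
    exact lt_of_le_of_lt hmk Cardinal.aleph0_lt_aleph_one
  refine ⟨iSup (fun s : ↥S => treeHeight s.1) + 1, succ_lt_omega1 hsup, ?_⟩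
  intro s hs
  exact lt_of_le_of_lt (Ordinal.le_iSup (fun s : ↥S => treeHeight s.1) ⟨s, hs⟩)
    (lt_add_one_ordinal _)

lemma heightLt_countable {α : Type} [PartialOrder α] (hT : IsOmega1Tree α)
    {d : Ordinal} (hd : d < omega1) : {t : α | treeHeight t < d}.Countable := by
  have heq : {t : α | treeHeight t < d} = ⋃ b ∈ Set.Iio d, {t : α | treeHeight t = b} := by
    ext t
    simp only [Set.mem_setOf_eq, Set.mem_iUnion, Set.mem_Iio, exists_prop]
    exact ⟨fun h => ⟨_, h, rfl⟩, fun ⟨b, hb, he⟩ => he ▸ hb⟩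
  rw [heq]
  exact Set.Countable.biUnion (ordinal_Iio_countable hd) (fun b _ => hT.2.2.2 b)

lemma exists_le_height {α : Type} [PartialOrder α]
    (hwo : ∀ t : α, IsWellOrder {s : α // s < t} (fun a b => a.1 < b.1))
    {t : α} {b : Ordinal} (hb : b < treeHeight t) : ∃ s : α, s ≤ t ∧ treeHeight s = b := by
  have inst := hwo t
  have ht : treeHeight t = @Ordinal.type _ (fun a b : {s : α // s < t} => a.1 < b.1) inst := by
    unfold treeHeight
    rw [dif_pos (hwo t)]
  rw [ht] at hb
  obtain ⟨x, hx⟩ := @Ordinal.typein_surj _ _ inst _ hb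
  refine ⟨x.1, le_of_lt x.2, ?_⟩
  have inst2 := hwo x.1
  have hx1 : treeHeight x.1 =
      @Ordinal.type _ (fun a b : {s : α // s < x.1} => a.1 < b.1) inst2 := by
    unfold treeHeight
    rw [dif_pos (hwo x.1)]
  rw [hx1, ← hx, ← @Ordinal.type_subrel _ _ inst x]
  refine Ordinal.type_eq.mpr ⟨⟨⟨fun s => ⟨⟨s.1, lt_trans s.2 x.2⟩, s.2⟩,
    fun y => ⟨y.1.1, y.2⟩, fun s => rfl, fun y => rfl⟩, Iff.rfl⟩⟩

lemma subtree_mem_level {α : Type} [PartialOrder α] (hT : IsOmega1Tree α) {W : Set α}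
    (hW : IsSubtree W) {b : Ordinal} (hb : b < omega1) : ∃ t ∈ W, treeHeight t = b := by
  have h1 : ∃ t ∈ W, b ≤ treeHeight t := by
    by_contra hcon
    push_neg at hcon
    exact hW.1 ((heightLt_countable hT hb).mono (fun t ht => hcon t ht))
  obtain ⟨t, htW, hbt⟩ := h1
  rcases eq_or_lt_of_le hbt with heq | hlt
  · exact ⟨t, htW, heq.symm⟩
  · obtain ⟨s, hst, hsh⟩ := exists_le_height hT.1 hlt
    exact ⟨s, hW.2 s t hst htW, hsh⟩

lemma sup_mem_club {C : Set Ordinal.{0}} (hC : IsClubIn C omega1) (p : ℕ → Ordinal.{0})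
    (hmem : ∀ n, p n ∈ C) (hinc : ∀ n, p n < p (n + 1)) :
    iSup p ∈ C ∧ iSup p < omega1 := by
  have hlt : ∀ n, p n < omega1 := fun n => hC.1 (hmem n)
  have hs : iSup p < omega1 := sup_lt_omega1 hlt
  have hpos : (0 : Ordinal) < iSup p :=
    lt_of_le_of_lt zero_le' (lt_of_lt_of_le (hinc 0) (Ordinal.le_iSup p 1))
  refine ⟨hC.2.2 _ hs (pos_iff_ne_zero.mp hpos) ?_, hs⟩
  intro x hx
  obtain ⟨n, hn⟩ := Ordinal.lt_iSup_iff.mp hx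
  exact ⟨p n, hmem n, hn, lt_of_lt_of_le (hinc n) (Ordinal.le_iSup p (n + 1))⟩

lemma exists_closure_point {α : Type} [PartialOrder α] {C : Set Ordinal.{0}}
    (hC : IsClubIn C omega1) (S : Ordinal → Set α)
    (hSbd : ∀ b, b < omega1 → ∃ δ, δ < omega1 ∧ ∀ ξ < b, ∀ s ∈ S ξ, treeHeight s < δ)
    {b0 : Ordinal} (hb0 : b0 < omega1) :
    ∃ ν, ν ∈ C ∧ b0 < ν ∧ ν < omega1 ∧ ∀ ξ < ν, ∀ s ∈ S ξ, treeHeight s < ν := by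
  have step : ∀ b, b < omega1 →
      ∃ c, c ∈ C ∧ b < c ∧ ∀ ξ < b, ∀ s ∈ S ξ, treeHeight s < c := by
    intro b hb
    obtain ⟨δ, hδ, hδ2⟩ := hSbd b hb
    obtain ⟨c, hcC, hc⟩ := hC.2.1 (max (b + 1) δ) (max_lt (succ_lt_omega1 hb) hδ)
    refine ⟨c, hcC, lt_of_lt_of_le (lt_of_lt_of_le (lt_add_one_ordinal b)
      (le_max_left _ _)) hc, ?_⟩
    intro ξ hξ s hs
    exact lt_of_lt_of_le (hδ2 ξ hξ s hs) (le_trans (le_max_right _ _) hc)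
  choose f hf1 hf2 hf3 using step
  let p : ℕ → {x : Ordinal // x ∈ C} := fun n =>
    Nat.rec ⟨f b0 hb0, hf1 b0 hb0⟩ (fun _ ih => ⟨f ih.1 (hC.1 ih.2), hf1 _ _⟩) n
  have hp_lt : ∀ n, (p n).1 < (p (n + 1)).1 := fun n => hf2 _ _
  have hp_prop : ∀ n, ∀ ξ < (p n).1, ∀ s ∈ S ξ, treeHeight s < (p (n + 1)).1 :=
    fun n => hf3 _ _
  obtain ⟨hνC, hνlt⟩ := sup_mem_club hC (fun n => (p n).1) (fun n => (p n).2) hp_lt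
  refine ⟨iSup (fun n => (p n).1), hνC,
    lt_of_lt_of_le (hf2 b0 hb0) (Ordinal.le_iSup _ 0), hνlt, ?_⟩
  intro ξ hξ s hs
  obtain ⟨n, hn⟩ := Ordinal.lt_iSup_iff.mp hξ
  exact lt_of_lt_of_le (hp_prop n ξ hn s hs) (Ordinal.le_iSup _ (n + 1))

end Aux

/-- If `T` is an ω₁-tree such that ψ(T,F) holds for every predense
family `F` of subtrees of `T`, then `T` is saturated. -/
theorem stmt0 {α : Type} [PartialOrder α] (hT : IsOmega1Tree α)
    (h : ∀ F : Set (Set α), SubtreeFamily F → Predense F → Psi F) :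
    Saturated α := by
  intro F hFam hAD
  by_contra hbig
  rw [not_lt] at hbig
  classical
  set G : Set (Set α) := F ∪ perp F with hG
  have hGFam : SubtreeFamily G := by
    rintro S (hS | hS)
    · exact hFam S hS
    · exact hS.1
  have hGpre : Predense G := by
    intro S hS
    by_cases hcase : ∃ W ∈ F, ¬(S ∩ W).Countable
    · obtain ⟨W, hWF, hWc⟩ := hcase
      exact ⟨W, Or.inl hWF, hWc⟩
    · push_neg at hcase
      refine ⟨S, Or.inr ⟨hS, hcase⟩, ?_⟩
      rw [Set.inter_self]
      exact hS.1
  obtain ⟨U, C, hU, hC, hPsi⟩ := h G hGFam hGpre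
  have key : ∀ W ∈ F, ∃ ξ, ξ < omega1 ∧ U ξ ∈ G ∧ ¬(U ξ ∩ W).Countable := by
    intro W hWF
    by_contra hcon
    push_neg at hcon
    set S : Ordinal → Set α := fun ξ => if ξ < omega1 ∧ U ξ ∈ G then U ξ ∩ W else ∅ with hSdef
    have hScnt : ∀ ξ, (S ξ).Countable := by
      intro ξ
      by_cases hc : ξ < omega1 ∧ U ξ ∈ G
      · simp only [S, if_pos hc]
        exact hcon ξ hc.1 hc.2
      · simp only [S, if_neg hc]
        exact Set.countable_empty
    have hSbd : ∀ b, b < omega1 → ∃ δ, δ < omega1 ∧ ∀ ξ < b, ∀ s ∈ S ξ, treeHeight s < δ := by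
      intro b hb
      have hBc : (⋃ ξ ∈ Set.Iio b, S ξ).Countable :=
        Set.Countable.biUnion (ordinal_Iio_countable hb) (fun ξ _ => hScnt ξ)
      obtain ⟨δ, hδ, hδ2⟩ := bound_of_countable hT hBc
      exact ⟨δ, hδ, fun ξ hξ s hs => hδ2 s (Set.mem_biUnion hξ hs)⟩
    have stepq : ∀ b, b < omega1 →
        ∃ ν, ν ∈ C ∧ b < ν ∧ ν < omega1 ∧ ∀ ξ < ν, ∀ s ∈ S ξ, treeHeight s < ν :=
      fun b hb => exists_closure_point hC S hSbd hb
    choose g hg1 hg2 hg3 hg4 using stepq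
    let q : ℕ → {x : Ordinal // x ∈ C ∧ x < omega1 ∧ ∀ ξ < x, ∀ s ∈ S ξ, treeHeight s < x} :=
      fun n => Nat.rec ⟨g 0 omega1_pos, hg1 0 omega1_pos, hg3 0 omega1_pos, hg4 0 omega1_pos⟩
        (fun _ ih => ⟨g ih.1 ih.2.2.1, hg1 _ _, hg3 _ _, hg4 _ _⟩) n
    have hq_lt : ∀ n, (q n).1 < (q (n + 1)).1 := fun n => hg2 _ _
    obtain ⟨haC, halt⟩ := sup_mem_club hC (fun n => (q n).1) (fun n => (q n).2.1) hq_lt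
    obtain ⟨t, htW, hth⟩ := subtree_mem_level hT (hFam W hWF) halt
    obtain ⟨b, hba, hb2⟩ := hPsi _ haC t hth
    obtain ⟨n, hn⟩ := Ordinal.lt_iSup_iff.mp hba
    have hνa : (q n).1 < iSup (fun n => (q n).1) :=
      lt_of_lt_of_le (hq_lt n) (Ordinal.le_iSup _ (n + 1))
    obtain ⟨ξ, hξν, hUξG, s, hsh, hst, hsU⟩ := hb2 (q n).1 (q n).2.1 hn hνa
    have hsW : s ∈ W := (hFam W hWF).2 s t hst htW
    have hξω : ξ < omega1 := lt_trans hξν (q n).2.2.1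
    have hsS : s ∈ S ξ := by
      simp only [S, if_pos (And.intro hξω hUξG)]
      exact ⟨hsU, hsW⟩
    have hfin := (q n).2.2.2 ξ hξν s hsS
    rw [hsh] at hfin
    exact lt_irrefl _ hfin
  choose ξf hξ1 hξ2 hξ3 using fun (W : ↥F) => key W.1 W.2
  have hninj : ¬ Function.Injective
      (fun W : ↥F => (⟨ξf W, hξ1 W⟩ : ↥(Set.Iio omega1))) := by
    intro hinj
    have h1 : Cardinal.lift.{1} (Cardinal.mk ↥F) ≤
        Cardinal.lift.{0} (Cardinal.mk ↥(Set.Iio omega1)) :=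
      Cardinal.lift_mk_le'.mpr ⟨⟨_, hinj⟩⟩
    rw [Ordinal.mk_Iio_ordinal, omega1_card, Cardinal.lift_uzero] at h1
    have h2 : Cardinal.mk ↥F ≤ Cardinal.aleph 1 := Cardinal.lift_le.mp h1
    have h3 : Cardinal.aleph 1 < Cardinal.aleph 2 :=
      Cardinal.aleph_lt_aleph.mpr one_lt_two
    exact absurd hbig (not_le.mpr (lt_of_le_of_lt h2 h3))
  rw [Function.not_injective_iff] at hninj
  obtain ⟨W1, W2, heq, hne⟩ := hninj
  have hξeq : ξf W1 = ξf W2 := congrArg Subtype.val heq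
  rcases hξ2 W1 with hF' | hperp
  · by_cases hW1 : U (ξf W1) = W1.1
    · have hne2 : U (ξf W1) ≠ W2.1 := by
        intro hcontra
        exact hne (Subtype.ext (hW1.symm.trans hcontra))
      have hcnt : (U (ξf W1) ∩ W2.1).Countable := hAD _ hF' W2.1 W2.2 hne2
      rw [hξeq] at hcnt
      exact hξ3 W2 hcnt
    · exact hξ3 W1 (hAD _ hF' W1.1 W1.2 hW1)
  · exact hξ3 W1 (hperp.2 W1.1 W1.2)


end
end

section
/- Let T be a saturated ω₁-tree. Then for every family F of subtrees of T there exists a subfamily F* ⊆ F of cardinality at most ω₁ such that F^⊥ = (F*)^⊥. -/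
noncomputable section

/-- If `T` is a saturated ω₁-tree, then every family `F` of subtrees of `T`
has a subfamily `F* ⊆ F` of cardinality at most ω₁ with `F^⊥ = (F*)^⊥`. -/
theorem stmt1 {α : Type} [PartialOrder α] (hT : IsOmega1Tree α) (hsat : Saturated α)
    (F : Set (Set α)) (hF : SubtreeFamily F) :
    ∃ F' : Set (Set α), F' ⊆ F ∧ Cardinal.mk ↥F' ≤ Cardinal.aleph 1 ∧
      perp F' = perp F := by
  classical
  set P : Set (Set (Set α)) := {A | (∀ B ∈ A, IsSubtree B ∧ ∃ W ∈ F, B ⊆ W) ∧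
    ∀ B ∈ A, ∀ B' ∈ A, B ≠ B' → (B ∩ B').Countable} with hP
  obtain ⟨A, hAmem, hAmax⟩ : ∃ A, Maximal (· ∈ P) A := by
    refine zorn_subset P ?_
    intro c hc hchain
    refine ⟨⋃₀ c, ⟨?_, ?_⟩, fun s hs => Set.subset_sUnion_of_mem hs⟩
    · rintro B ⟨a, ha, hBa⟩
      exact (hc ha).1 B hBa
    · rintro B ⟨a, ha, hBa⟩ B' ⟨a', ha', hB'a'⟩ hne
      rcases hchain.total ha ha' with h | h
      · exact (hc ha').2 B (h hBa) B' hB'a' hne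
      · exact (hc ha).2 B hBa B' (h hB'a') hne
  -- the choice of a witness W ∈ F containing each member of A
  set g : Set α → Set α := fun B =>
    if h : ∃ W ∈ F, B ⊆ W then h.choose else ∅ with hg
  have hgF : ∀ B ∈ A, g B ∈ F ∧ B ⊆ g B := by
    intro B hB
    have h : ∃ W ∈ F, B ⊆ W := (hAmem.1 B hB).2
    simp only [hg, dif_pos h]
    exact ⟨h.choose_spec.1, h.choose_spec.2⟩
  refine ⟨g '' A, ?_, ?_, ?_⟩
  · rintro _ ⟨B, hB, rfl⟩
    exact (hgF B hB).1
  · -- cardinality bound via saturation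
    have hcard : Cardinal.mk ↥A < Cardinal.aleph 2 :=
      hsat A (fun B hB => (hAmem.1 B hB).1) hAmem.2
    have h2 : Cardinal.aleph 2 = Order.succ (Cardinal.aleph 1) := by
      have : (2 : Ordinal) = Order.succ 1 := by
        rw [← Ordinal.add_one_eq_succ]; norm_num
      rw [this, Cardinal.aleph_succ]
    have hA1 : Cardinal.mk ↥A ≤ Cardinal.aleph 1 := by
      rw [h2] at hcard
      exact Order.lt_succ_iff.mp hcard
    exact le_trans (Cardinal.mk_image_le) hA1
  · -- perp (g '' A) = perp F
    apply Set.Subset.antisymm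
    · -- hard direction
      rintro S ⟨hS, hSW⟩
      refine ⟨hS, ?_⟩
      intro W hW
      by_contra hunc
      -- B := S ∩ W is a subtree contained in W
      have hBsub : IsSubtree (S ∩ W) :=
        ⟨hunc, fun s t hst ht => ⟨hS.2 s t hst ht.1, (hF W hW).2 s t hst ht.2⟩⟩
      have key : ∃ A' ∈ A, ¬(S ∩ g A').Countable := by
        by_cases hBA : S ∩ W ∈ A
        · refine ⟨S ∩ W, hBA, fun hc => hunc (hc.mono ?_)⟩
          intro x hx
          exact ⟨hx.1, (hgF _ hBA).2 hx⟩
        · -- insert (S ∩ W) A cannot be in P, by maximality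
          have hnot : insert (S ∩ W) A ∉ P := by
            intro hmem
            exact hBA (hAmax hmem (Set.subset_insert _ _) (Set.mem_insert _ _))
          have hfirst : ∀ X ∈ insert (S ∩ W) A, IsSubtree X ∧ ∃ W ∈ F, X ⊆ W := by
            rintro X hX
            rcases hX with rfl | hX
            · exact ⟨hBsub, W, hW, Set.inter_subset_right⟩
            · exact hAmem.1 X hX
          have : ¬ ∀ X ∈ insert (S ∩ W) A, ∀ Y ∈ insert (S ∩ W) A,
              X ≠ Y → (X ∩ Y).Countable := by
            intro h; exact hnot ⟨hfirst, h⟩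
          push_neg at this
          obtain ⟨X, hX, Y, hY, hXY, hc⟩ := this
          -- one of X, Y is S ∩ W, the other is in A
          have : ∃ A' ∈ A, ¬((S ∩ W) ∩ A').Countable := by
            rcases hX with rfl | hX
            · rcases hY with rfl | hY
              · exact absurd rfl hXY
              · exact ⟨Y, hY, hc⟩
            · rcases hY with rfl | hY
              · refine ⟨X, hX, fun h => hc (h.mono ?_)⟩
                intro x hx
                exact ⟨hx.2, hx.1⟩
              · exact absurd (hAmem.2 X hX Y hY hXY) hc
          obtain ⟨A', hA', hcA'⟩ := this
          refine ⟨A', hA', fun hcnt => hcA' (hcnt.mono ?_)⟩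
          intro x hx
          exact ⟨hx.1.1, (hgF A' hA').2 hx.2⟩
      obtain ⟨A', hA', hcA'⟩ := key
      exact hcA' (hSW (g A') ⟨A', hA', rfl⟩)
    · -- easy direction: perp is antitone
      rintro S ⟨hS, hSW⟩
      exact ⟨hS, fun W hW => hSW W (by rcases hW with ⟨B, hB, rfl⟩; exact (hgF B hB).1)⟩

end
end

section
/- Let T be a saturated ω₁-tree such that φ(T,F) holds for every family F of subtrees of T of cardinality at most ω₁. Then φ(T,F) holds for every family F of subtrees of T. -/
noncomputable section

/-- If `T` is a saturated ω₁-tree such that φ(T,F) holds for every family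
`F` of subtrees of `T` of cardinality at most ω₁, then φ(T,F) holds for every family
`F` of subtrees of `T`. -/
theorem stmt2 {α : Type} [PartialOrder α] (hT : IsOmega1Tree α) (hsat : Saturated α)
    (h : ∀ F : Set (Set α), SubtreeFamily F → Cardinal.mk ↥F ≤ Cardinal.aleph 1 → Phi F) :
    ∀ F : Set (Set α), SubtreeFamily F → Phi F := by
  classical
  intro F hF
  -- The collection of antichains of subtrees, each contained in a member of F
  set P : Set (Set α) := {S | IsSubtree S ∧ ∃ W ∈ F, S ⊆ W} with hP
  set 𝒜 : Set (Set (Set α)) :=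
    {A | A ⊆ P ∧ ∀ S ∈ A, ∀ W ∈ A, S ≠ W → (S ∩ W).Countable} with h𝒜
  obtain ⟨A, hAmax⟩ : ∃ A, Maximal (· ∈ 𝒜) A := by
    apply zorn_subset
    intro c hc hchain
    refine ⟨⋃₀ c, ⟨?_, ?_⟩, fun s hs => Set.subset_sUnion_of_mem hs⟩
    · intro S hS
      obtain ⟨A, hA, hSA⟩ := hS
      exact (hc hA).1 hSA
    · intro S hS W hW hne
      obtain ⟨A1, hA1, hS1⟩ := hS
      obtain ⟨A2, hA2, hW2⟩ := hW
      rcases hchain.total hA1 hA2 with hle | hle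
      · exact (hc hA2).2 S (hle hS1) W hW2 hne
      · exact (hc hA1).2 S hS1 W (hle hW2) hne
  have hAP : A ⊆ P := hAmax.1.1
  have hAad : ∀ S ∈ A, ∀ W ∈ A, S ≠ W → (S ∩ W).Countable := hAmax.1.2
  -- choose a member of F containing each element of A
  have hchoice : ∀ S : ↥A, ∃ W ∈ F, (S : Set α) ⊆ W := fun S => (hAP S.2).2
  choose f hfF hfsub using hchoice
  set F₀ : Set (Set α) := Set.range f with hF₀
  have hF₀F : F₀ ⊆ F := by rintro W ⟨S, rfl⟩; exact hfF S
  have hF₀fam : SubtreeFamily F₀ := fun W hW => hF W (hF₀F hW)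
  -- cardinality bound via saturation
  have hAcard : Cardinal.mk ↥A < Cardinal.aleph 2 := by
    apply hsat A (fun S hS => (hAP hS).1) hAad
  have hcard : Cardinal.mk ↥F₀ ≤ Cardinal.aleph 1 := by
    have h1 : Cardinal.mk ↥F₀ ≤ Cardinal.mk ↥A := Cardinal.mk_range_le
    refine h1.trans ?_
    have h2 : (2 : Ordinal) = Order.succ (1 : Ordinal) := by
      rw [← Ordinal.add_one_eq_succ]; norm_num
    rw [h2, Cardinal.aleph_succ] at hAcard
    exact Order.lt_succ_iff.mp hAcard
  -- key claim: perp F₀ ⊆ perp F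
  have hperp : perp F₀ ⊆ perp F := by
    rintro Uu ⟨hUu, hW0⟩
    refine ⟨hUu, ?_⟩
    intro W hW
    by_contra hunc
    set S : Set α := Uu ∩ W with hSdef
    have hSsub : IsSubtree S := by
      refine ⟨hunc, ?_⟩
      intro s t hst htS
      exact ⟨hUu.2 s t hst htS.1, (hF W hW).2 s t hst htS.2⟩
    have hSP : S ∈ P := ⟨hSsub, W, hW, Set.inter_subset_right⟩
    by_cases hSA : S ∈ A
    · -- then S ⊆ Uu ∩ f ⟨S,_⟩, which is countable
      have hc : (Uu ∩ f ⟨S, hSA⟩).Countable := hW0 _ ⟨⟨S, hSA⟩, rfl⟩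
      have : S ⊆ Uu ∩ f ⟨S, hSA⟩ :=
        fun x hx => ⟨hx.1, hfsub ⟨S, hSA⟩ hx⟩
      exact hunc (hc.mono this)
    · -- S must meet some member of A uncountably, by maximality
      have hall : ∃ S' ∈ A, ¬(S ∩ S').Countable := by
        by_contra hno
        push_neg at hno
        have hmem : A ∪ {S} ∈ 𝒜 := by
          constructor
          · intro x hx
            rcases hx with hx | hx
            · exact hAP hx
            · rw [Set.mem_singleton_iff] at hx; subst hx; exact hSP
          · intro x hx y hy hne
            rcases hx with hx | hx <;> rcases hy with hy | hy
            · exact hAad x hx y hy hne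
            · rw [Set.mem_singleton_iff] at hy; subst hy
              rw [Set.inter_comm]; exact hno x hx
            · rw [Set.mem_singleton_iff] at hx; subst hx
              exact hno y hy
            · rw [Set.mem_singleton_iff] at hx hy; subst hx; subst hy
              exact absurd rfl hne
        have := hAmax.2 hmem Set.subset_union_left
        exact hSA (this (Set.mem_union_right _ rfl))
      obtain ⟨S', hS'A, hS'unc⟩ := hall
      have hc : (Uu ∩ f ⟨S', hS'A⟩).Countable := hW0 _ ⟨⟨S', hS'A⟩, rfl⟩
      have hsub : S ∩ S' ⊆ Uu ∩ f ⟨S', hS'A⟩ :=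
        fun x hx => ⟨hx.1.1, hfsub ⟨S', hS'A⟩ hx.2⟩
      exact hS'unc (hc.mono hsub)
  -- conclude
  obtain ⟨U, C, hU, hC, hmain⟩ := h F₀ hF₀fam hcard
  refine ⟨U, C, hU, hC, ?_⟩
  intro a ha t ht
  rcases hmain a ha t ht with ⟨ξ, hξ, htU, hp⟩ | ⟨b, hb, hrest⟩
  · exact Or.inl ⟨ξ, hξ, htU, hperp hp⟩
  · refine Or.inr ⟨b, hb, ?_⟩
    intro ν hν hbν hνa
    obtain ⟨ξ, hξ, hUF, hs⟩ := hrest ν hν hbν hνa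
    exact ⟨ξ, hξ, hF₀F hUF, hs⟩

end
end

section
/- Let T be an ω₁-tree and let U be an Aronszajn tree. If φ(T ⊗ U, G) holds for every family G of subtrees of T ⊗ U, then φ(T, F) holds for every family F of subtrees of T. -/
noncomputable section

section Aux
variable {α : Type} [PartialOrder α]

lemma treeHeight_eq_type {t : α} (hw : IsWellOrder {s : α // s < t} (fun a b => a.1 < b.1)) :
    treeHeight t = @Ordinal.type {s : α // s < t} (fun a b => a.1 < b.1) hw := by
  classical
  simp only [treeHeight]
  rw [dif_pos hw]

lemma treeHeight_eq_typein (hw : ∀ t : α, IsWellOrder {s : α // s < t} (fun a b => a.1 < b.1))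
    {s t : α} (h : s < t) :
    treeHeight s = @Ordinal.typein {x : α // x < t} (fun a b => a.1 < b.1) (hw t) ⟨s, h⟩ := by
  rw [treeHeight_eq_type (hw s), ← @Ordinal.type_subrel {x : α // x < t} _ (hw t) ⟨s, h⟩]
  exact (⟨⟨fun x => ⟨⟨x.1, x.2.trans h⟩, x.2⟩, fun b => ⟨b.1.1, b.2⟩,
    fun x => rfl, fun b => rfl⟩, Iff.rfl⟩ :
      (fun (a b : {x : α // x < s}) => a.1 < b.1) ≃r _).ordinal_type_eq

lemma treeHeight_lt_of_lt (hw : ∀ t : α, IsWellOrder {s : α // s < t} (fun a b => a.1 < b.1))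
    {s t : α} (h : s < t) : treeHeight s < treeHeight t := by
  rw [treeHeight_eq_typein hw h, treeHeight_eq_type (hw t)]
  exact Ordinal.typein_lt_type _ _

lemma treeHeight_le_of_le (hw : ∀ t : α, IsWellOrder {s : α // s < t} (fun a b => a.1 < b.1))
    {s t : α} (h : s ≤ t) : treeHeight s ≤ treeHeight t := by
  rcases h.lt_or_eq with h' | rfl
  · exact (treeHeight_lt_of_lt hw h').le
  · exact le_rfl

lemma exists_restrict (hw : ∀ t : α, IsWellOrder {s : α // s < t} (fun a b => a.1 < b.1))
    {t : α} {γ : Ordinal} (h : γ < treeHeight t) : ∃ s, s < t ∧ treeHeight s = γ := by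
  rw [treeHeight_eq_type (hw t)] at h
  obtain ⟨a, ha⟩ := Ordinal.typein_surj _ h
  exact ⟨a.1, a.2, by rw [treeHeight_eq_typein hw a.2]; exact ha⟩

lemma comparable_of_le (hw : ∀ t : α, IsWellOrder {s : α // s < t} (fun a b => a.1 < b.1))
    {s₁ s₂ t : α} (h₁ : s₁ ≤ t) (h₂ : s₂ ≤ t) : s₁ ≤ s₂ ∨ s₂ ≤ s₁ := by
  rcases h₁.lt_or_eq with h₁ | rfl
  · rcases h₂.lt_or_eq with h₂ | rfl
    · have := (hw t).toTrichotomous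
      rcases trichotomous_of (fun (a b : {s : α // s < t}) => a.1 < b.1) ⟨s₁, h₁⟩ ⟨s₂, h₂⟩ with
        h | h | h
      · exact Or.inl h.le
      · exact Or.inl (congrArg Subtype.val h).le
      · exact Or.inr h.le
    · exact Or.inl h₁.le
  · exact Or.inr h₂

lemma eq_of_height_eq (hw : ∀ t : α, IsWellOrder {s : α // s < t} (fun a b => a.1 < b.1))
    {s₁ s₂ t : α} (h₁ : s₁ ≤ t) (h₂ : s₂ ≤ t) (hh : treeHeight s₁ = treeHeight s₂) : s₁ = s₂ := by
  rcases comparable_of_le hw h₁ h₂ with h | h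
  · rcases h.lt_or_eq with h | h
    · exact absurd hh (treeHeight_lt_of_lt hw h).ne
    · exact h
  · rcases h.lt_or_eq with h | h
    · exact absurd hh.symm (treeHeight_lt_of_lt hw h).ne
    · exact h.symm

end Aux

section ProdTree
variable {α β : Type} [PartialOrder α] [PartialOrder β]

lemma prod_lt_both
    (hwα : ∀ t : α, IsWellOrder {s : α // s < t} (fun a b => a.1 < b.1))
    (hwβ : ∀ t : β, IsWellOrder {s : β // s < t} (fun a b => a.1 < b.1))
    {p q : {p : α × β // treeHeight p.1 = treeHeight p.2}}
    (h : q < p) : q.1.1 < p.1.1 ∧ q.1.2 < p.1.2 := by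
  have hle : q.1 ≤ p.1 := le_of_lt (Subtype.coe_lt_coe.2 h)
  have h1 : q.1.1 ≤ p.1.1 := (Prod.le_def.1 hle).1
  have h2 : q.1.2 ≤ p.1.2 := (Prod.le_def.1 hle).2
  have hne : q.1 ≠ p.1 := fun e => h.ne (Subtype.ext e)
  rcases h1.lt_or_eq with h1' | h1'
  · refine ⟨h1', ?_⟩
    rcases h2.lt_or_eq with h2' | h2'
    · exact h2'
    · exfalso
      have := treeHeight_lt_of_lt hwα h1'
      rw [q.2, p.2, h2'] at this
      exact lt_irrefl _ this
  · exfalso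
    rcases h2.lt_or_eq with h2' | h2'
    · have := treeHeight_lt_of_lt hwβ h2'
      rw [← q.2, ← p.2, h1'] at this
      exact lt_irrefl _ this
    · exact hne (Prod.ext_iff.2 ⟨h1', h2'⟩)

lemma prod_iso
    (hwα : ∀ t : α, IsWellOrder {s : α // s < t} (fun a b => a.1 < b.1))
    (hwβ : ∀ t : β, IsWellOrder {s : β // s < t} (fun a b => a.1 < b.1))
    (p : {p : α × β // treeHeight p.1 = treeHeight p.2}) :
    Nonempty ((fun (a b : {q : {p : α × β // treeHeight p.1 = treeHeight p.2} // q < p}) =>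
        a.1 < b.1) ≃r (fun (a b : {s : α // s < p.1.1}) => a.1 < b.1)) := by
  let f : {q : {p : α × β // treeHeight p.1 = treeHeight p.2} // q < p} → {s : α // s < p.1.1} :=
    fun q => ⟨q.1.1.1, (prod_lt_both hwα hwβ q.2).1⟩
  have hinj : Function.Injective f := by
    intro a b hab
    have h1 : a.1.1.1 = b.1.1.1 := congrArg Subtype.val hab
    have h2 : a.1.1.2 = b.1.1.2 := by
      refine eq_of_height_eq hwβ (prod_lt_both hwα hwβ a.2).2.le
        (prod_lt_both hwα hwβ b.2).2.le ?_
      rw [← a.1.2, ← b.1.2, h1]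
    exact Subtype.ext (Subtype.ext (Prod.ext_iff.2 ⟨h1, h2⟩))
  have hsurj : Function.Surjective f := by
    intro s
    have hlt : treeHeight s.1 < treeHeight p.1.2 := by
      rw [← p.2]; exact treeHeight_lt_of_lt hwα s.2
    obtain ⟨u, hu, hu2⟩ := exists_restrict hwβ hlt
    have hmem : treeHeight ((s.1, u) : α × β).1 = treeHeight ((s.1, u) : α × β).2 := by
      simpa using hu2.symm
    have hq : (⟨(s.1, u), hmem⟩ : {p : α × β // treeHeight p.1 = treeHeight p.2}) < p := by
      rw [← Subtype.coe_lt_coe]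
      refine lt_iff_le_and_ne.2 ⟨Prod.le_def.2 ⟨s.2.le, hu.le⟩, fun e => ?_⟩
      exact absurd (congrArg Prod.fst e) s.2.ne
    exact ⟨⟨⟨(s.1, u), hmem⟩, hq⟩, Subtype.ext rfl⟩
  
  refine ⟨RelIso.mk (Equiv.ofBijective f ⟨hinj, hsurj⟩) ?_⟩
  intro a b
  show a.1.1.1 < b.1.1.1 ↔ a.1 < b.1
  constructor
  · intro h1
    have ha2 : a.1.1.2 ≤ p.1.2 := (prod_lt_both hwα hwβ a.2).2.le
    have hb2 : b.1.1.2 ≤ p.1.2 := (prod_lt_both hwα hwβ b.2).2.le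
    have hh : treeHeight a.1.1.2 < treeHeight b.1.1.2 := by
      rw [← a.1.2, ← b.1.2]; exact treeHeight_lt_of_lt hwα h1
    have h2 : a.1.1.2 ≤ b.1.1.2 := by
      rcases comparable_of_le hwβ ha2 hb2 with h | h
      · exact h
      · exact absurd (treeHeight_le_of_le hwβ h) (not_le.2 hh)
    rw [← Subtype.coe_lt_coe]
    refine lt_iff_le_and_ne.2 ⟨Prod.le_def.2 ⟨h1.le, h2⟩, fun e => ?_⟩
    exact absurd (congrArg Prod.fst e) h1.ne
  · intro h
    exact (prod_lt_both hwα hwβ h).1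

lemma prod_isWellOrder
    (hwα : ∀ t : α, IsWellOrder {s : α // s < t} (fun a b => a.1 < b.1))
    (hwβ : ∀ t : β, IsWellOrder {s : β // s < t} (fun a b => a.1 < b.1))
    (p : {p : α × β // treeHeight p.1 = treeHeight p.2}) :
    IsWellOrder {q : {p : α × β // treeHeight p.1 = treeHeight p.2} // q < p}
      (fun a b => a.1 < b.1) := by
  obtain ⟨e⟩ := prod_iso hwα hwβ p
  exact @RelEmbedding.isWellOrder _ _ _ _ e.toRelEmbedding (hwα p.1.1)

lemma prod_treeHeight
    (hwα : ∀ t : α, IsWellOrder {s : α // s < t} (fun a b => a.1 < b.1))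
    (hwβ : ∀ t : β, IsWellOrder {s : β // s < t} (fun a b => a.1 < b.1))
    (p : {p : α × β // treeHeight p.1 = treeHeight p.2}) :
    treeHeight p = treeHeight p.1.1 := by
  obtain ⟨e⟩ := prod_iso hwα hwβ p
  haveI := prod_isWellOrder hwα hwβ p
  haveI := hwα p.1.1
  rw [treeHeight_eq_type (prod_isWellOrder hwα hwβ p), treeHeight_eq_type (hwα p.1.1)]
  exact e.ordinal_type_eq

end ProdTree

/-- Let `T` be an ω₁-tree and `U` an Aronszajn tree. If φ(T ⊗ U, G) holds
for every family `G` of subtrees of `T ⊗ U`, then φ(T, F) holds for every family `F`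
of subtrees of `T`. -/
theorem stmt4 {α β : Type} [PartialOrder α] [PartialOrder β]
    (hT : IsOmega1Tree α) (hU : IsAronszajnTree β)
    (h : ∀ G : Set (Set {p : α × β // treeHeight p.1 = treeHeight p.2}),
      SubtreeFamily G → Phi G) :
    ∀ F : Set (Set α), SubtreeFamily F → Phi F := by
  classical
  intro F hF
  obtain ⟨hwα, hhα, hlevα, hcntα⟩ := hT
  obtain ⟨⟨hwβ, hhβ, hlevβ, hcntβ⟩, _hchain⟩ := hU
  set star : Set α → Set {p : α × β // treeHeight p.1 = treeHeight p.2} :=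
    fun W => {p | p.1.1 ∈ W} with hstar_def
  have hstar_subtree : ∀ W ∈ F, IsSubtree (star W) := by
    intro W hW
    constructor
    · intro hc
      apply (hF W hW).1
      rw [← Set.countable_coe_iff] at hc ⊢
      have hex : ∀ w : W, ∃ p : star W, p.1.1.1 = w.1 := by
        intro w
        obtain ⟨u, hu⟩ := hlevβ (treeHeight w.1) (hhα w.1)
        exact ⟨⟨⟨(w.1, u), by simpa using hu.symm⟩, w.2⟩, rfl⟩
      choose f hf using hex
      have hfinj : Function.Injective f := by
        intro a b hab
        apply Subtype.ext
        rw [← hf a, ← hf b, hab]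
      haveI := hc
      exact hfinj.countable
    · intro q p hqp hp
      exact (hF W hW).2 q.1.1 p.1.1 (Prod.le_def.1 (Subtype.coe_le_coe.2 hqp)).1 hp
  have hG : SubtreeFamily (star '' F) := by
    rintro S ⟨W, hW, rfl⟩
    exact hstar_subtree W hW
  obtain ⟨V, C, hVsub, hclub, hmain⟩ := h (star '' F) hG
  set proj : Set {p : α × β // treeHeight p.1 = treeHeight p.2} → Set α :=
    fun S => {s | ∃ p ∈ S, p.1.1 = s} with hproj_def
  have hproj_subtree : ∀ S, IsSubtree S → IsSubtree (proj S) := by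
    intro S hS
    constructor
    · intro hc
      apply hS.1
      have hsub : S ⊆ ⋃ s ∈ proj S, {p | p ∈ S ∧ p.1.1 = s} := by
        intro p hp
        exact Set.mem_biUnion ⟨p, hp, rfl⟩ ⟨hp, rfl⟩
      refine Set.Countable.mono hsub (Set.Countable.biUnion hc ?_)
      intro s _
      rw [← Set.countable_coe_iff]
      have hcl := hcntβ (treeHeight s)
      rw [← Set.countable_coe_iff] at hcl
      have hex : ∀ q : {p : {p : α × β // treeHeight p.1 = treeHeight p.2} //
          p ∈ S ∧ p.1.1 = s}, treeHeight q.1.1.2 = treeHeight s := by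
        intro q
        rw [← q.1.2, q.2.2]
      let g : {p : {p : α × β // treeHeight p.1 = treeHeight p.2} // p ∈ S ∧ p.1.1 = s} →
          {t : β | treeHeight t = treeHeight s} := fun q => ⟨q.1.1.2, hex q⟩
      have hginj : Function.Injective g := by
        intro a b hab
        have h2 : a.1.1.2 = b.1.1.2 := congrArg Subtype.val hab
        have h1 : a.1.1.1 = b.1.1.1 := by rw [a.2.2, b.2.2]
        exact Subtype.ext (Subtype.ext (Prod.ext_iff.2 ⟨h1, h2⟩))
      haveI := hcl
      exact hginj.countable
    · rintro s' s hss ⟨p, hpS, hps⟩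
      rcases eq_or_lt_of_le hss with rfl | hlt
      · exact ⟨p, hpS, hps⟩
      · have hlt2 : s' < p.1.1 := hps ▸ hlt
        have hh : treeHeight s' < treeHeight p.1.2 := by
          rw [← p.2]; exact treeHeight_lt_of_lt hwα hlt2
        obtain ⟨u, hu, hu2⟩ := exists_restrict hwβ hh
        have hmem : treeHeight ((s', u) : α × β).1 = treeHeight ((s', u) : α × β).2 := by
          simpa using hu2.symm
        refine ⟨⟨(s', u), hmem⟩, hS.2 _ p ?_ hpS, rfl⟩
        exact Subtype.coe_le_coe.1 (Prod.le_def.2 ⟨hlt2.le, hu.le⟩)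
  have hproj_perp : ∀ S, ∀ W ∈ F, (S ∩ star W).Countable → (proj S ∩ W).Countable := by
    intro S W _ hc
    rw [← Set.countable_coe_iff] at hc ⊢
    have hex : ∀ s : (proj S ∩ W : Set α), ∃ p : (S ∩ star W : Set _), p.1.1.1 = s.1 := by
      rintro ⟨s, ⟨p, hpS, hps⟩, hsW⟩
      exact ⟨⟨p, hpS, show p.1.1 ∈ W from hps ▸ hsW⟩, hps⟩
    choose f hf using hex
    have hfinj : Function.Injective f := by
      intro a b hab
      apply Subtype.ext
      rw [← hf a, ← hf b, hab]
    haveI := hc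
    exact hfinj.countable
  refine ⟨fun ξ => if hx : ∃ W ∈ F, star W = V ξ then hx.choose else proj (V ξ),
    C, ?_, hclub, ?_⟩
  · intro ξ hξ
    show IsSubtree (if hx : ∃ W ∈ F, star W = V ξ then hx.choose else proj (V ξ))
    split_ifs with hx
    · exact hF _ hx.choose_spec.1
    · exact hproj_subtree _ (hVsub ξ hξ)
  · intro a haC t hta
    have haω : a < omega1 := hclub.1 haC
    obtain ⟨u, hu⟩ := hlevβ a haω
    have hmem : treeHeight ((t, u) : α × β).1 = treeHeight ((t, u) : α × β).2 := by
      simpa using hta.trans hu.symm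
    set p : {p : α × β // treeHeight p.1 = treeHeight p.2} := ⟨(t, u), hmem⟩ with hp_def
    have hp : treeHeight p = a := by
      rw [prod_treeHeight hwα hwβ p]; exact hta
    rcases hmain a haC p hp with ⟨ξ, hξa, hpV, hVperp⟩ | ⟨b, hba, hb⟩
    · left
      have hnx : ¬∃ W ∈ F, star W = V ξ := by
        rintro ⟨W, hW, hWV⟩
        have hcc := hVperp.2 (star W) ⟨W, hW, rfl⟩
        rw [hWV, Set.inter_self] at hcc
        exact hVperp.1.1 hcc
      refine ⟨ξ, hξa, ?_⟩
      show t ∈ (if hx : ∃ W ∈ F, star W = V ξ then hx.choose else proj (V ξ)) ∧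
        (if hx : ∃ W ∈ F, star W = V ξ then hx.choose else proj (V ξ)) ∈ perp F
      rw [dif_neg hnx]
      refine ⟨⟨p, hpV, rfl⟩, hproj_subtree _ hVperp.1, ?_⟩
      intro W hW
      exact hproj_perp _ W hW (hVperp.2 (star W) ⟨W, hW, rfl⟩)
    · right
      refine ⟨b, hba, fun ν hν hbν hνa => ?_⟩
      obtain ⟨ξ, hξν, hVG, q, hqν, hqp, hqV⟩ := hb ν hν hbν hνa
      obtain ⟨W, hWF, hWV⟩ := hVG
      have hx : ∃ W ∈ F, star W = V ξ := ⟨W, hWF, hWV⟩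
      refine ⟨ξ, hξν, ?_, q.1.1, ?_, ?_, ?_⟩
      · show (if hx : ∃ W ∈ F, star W = V ξ then hx.choose else proj (V ξ)) ∈ F
        rw [dif_pos hx]; exact hx.choose_spec.1
      · rw [← prod_treeHeight hwα hwβ q]; exact hqν
      · exact (Prod.le_def.1 (Subtype.coe_le_coe.2 hqp)).1
      · show q.1.1 ∈ (if hx : ∃ W ∈ F, star W = V ξ then hx.choose else proj (V ξ))
        rw [dif_pos hx]
        have hspec := hx.choose_spec.2
        rw [← hspec] at hqV
        exact hqV

end
end

section
/- An ω₁-tree S is Suslin if and only if S contains no uncountable chain and every subtree of S contains a cone, that is, a set of the form {y ∈ S : x ≤ y} for some x ∈ S. -/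
noncomputable section

section Helpers
variable {α : Type} [PartialOrder α]

lemma treeHeight_eq (hw : ∀ t : α, IsWellOrder {s : α // s < t} (fun a b => a.1 < b.1))
    (t : α) : treeHeight t = @Ordinal.type {s : α // s < t} (fun a b => a.1 < b.1) (hw t) := by
  rw [treeHeight]
  rw [dif_pos (hw t)]

lemma preds_comparable (hw : ∀ t : α, IsWellOrder {s : α // s < t} (fun a b => a.1 < b.1))
    {x y t : α} (hx : x ≤ t) (hy : y ≤ t) : x ≤ y ∨ y ≤ x := by
  rcases eq_or_lt_of_le hx with rfl | hx
  · exact Or.inr hy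
  rcases eq_or_lt_of_le hy with rfl | hy
  · exact Or.inl hx.le
  have := hw t
  rcases (trichotomous_of (fun a b : {s : α // s < t} => a.1 < b.1) ⟨x, hx⟩ ⟨y, hy⟩) with h | h | h
  · exact Or.inl h.le
  · exact Or.inl (le_of_eq (congrArg Subtype.val h))
  · exact Or.inr h.le

lemma treeHeight_typein (hw : ∀ t : α, IsWellOrder {s : α // s < t} (fun a b => a.1 < b.1))
    {t : α} (x : {s : α // s < t}) :
    treeHeight x.1 =
      @Ordinal.typein {s : α // s < t} (fun a b => a.1 < b.1) (hw t) x := by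
  have := hw t
  rw [treeHeight_eq hw, ← Ordinal.type_subrel]
  apply Ordinal.type_eq.2
  exact ⟨⟨⟨fun u => ⟨⟨u.1, u.2.trans x.2⟩, u.2⟩, fun v => ⟨v.1.1, v.2⟩,
      fun u => rfl, fun v => rfl⟩, Iff.rfl⟩⟩

lemma exists_pred_height (hw : ∀ t : α, IsWellOrder {s : α // s < t} (fun a b => a.1 < b.1))
    {t : α} {β : Ordinal} (hβ : β < treeHeight t) : ∃ s : α, s < t ∧ treeHeight s = β := by
  have := hw t
  rw [treeHeight_eq hw t] at hβ
  obtain ⟨x, hx⟩ := Ordinal.typein_surj _ hβ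
  exact ⟨x.1, x.2, (treeHeight_typein hw x).trans hx⟩

lemma preds_countable (hw : ∀ t : α, IsWellOrder {s : α // s < t} (fun a b => a.1 < b.1))
    (ht : ∀ t : α, treeHeight t < omega1) (m : α) : {s : α | s < m}.Countable := by
  rw [Cardinal.countable_iff_lt_aleph_one]
  have h1 : (treeHeight m).card < Cardinal.aleph 1 := Cardinal.lt_ord.1 (ht m)
  rw [treeHeight_eq hw m] at h1
  have := hw m
  rwa [Ordinal.card_type] at h1

lemma Iio_countable {β : Ordinal} (hβ : β < omega1) : (Set.Iio β).Countable := by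
  rw [Cardinal.countable_iff_lt_aleph_one, Ordinal.mk_Iio_ordinal,
    Cardinal.lift_lt_aleph_one]
  exact Cardinal.lt_ord.1 hβ

lemma Iio_omega1_uncountable : ¬ (Set.Iio omega1).Countable := by
  rw [Cardinal.countable_iff_lt_aleph_one, Ordinal.mk_Iio_ordinal]
  simp [omega1, Cardinal.lift_lt_aleph_one]

lemma heights_le_countable (hlev : ∀ β : Ordinal, {t : α | treeHeight t = β}.Countable)
    {β : Ordinal} (hβ : β < omega1) : {t : α | treeHeight t ≤ β}.Countable := by
  have hsucc : Order.succ β < omega1 := by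
    have : Order.IsSuccLimit omega1 := Cardinal.isSuccLimit_ord (Cardinal.aleph0_le_aleph 1)
    exact this.succ_lt hβ
  have : {t : α | treeHeight t ≤ β} ⊆ ⋃ γ ∈ Set.Iio (Order.succ β), {t : α | treeHeight t = γ} := by
    intro t ht
    refine Set.mem_biUnion ?_ rfl
    exact Order.lt_succ_iff.2 (show treeHeight t ≤ β from ht)
  exact Set.Countable.mono this ((Iio_countable hsucc).biUnion fun γ _ => hlev γ)

lemma exists_min_notin (hw : ∀ t : α, IsWellOrder {s : α // s < t} (fun a b => a.1 < b.1))
    {U : Set α} {d : α} (hd : d ∉ U) :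
    ∃ m, m ≤ d ∧ m ∉ U ∧ ∀ z, z < m → z ∈ U := by
  have wfi := hw d
  by_cases hne : ∃ s : {s : α // s < d}, s.1 ∉ U
  · set P : Set {s : α // s < d} := {s | s.1 ∉ U} with hP
    have hPne : P.Nonempty := hne
    have wf : WellFounded (fun a b : {s : α // s < d} => a.1 < b.1) := wfi.toIsWellFounded.wf
    refine ⟨(wf.min P hPne).1, (wf.min P hPne).2.le, wf.min_mem P hPne, fun z hz => ?_⟩
    by_contra hzU
    exact wf.not_lt_min P (show (⟨z, hz.trans (wf.min P hPne).2⟩ : {s : α // s < d}) ∈ P from hzU) hz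
  · push_neg at hne
    exact ⟨d, le_rfl, hd, fun z hz => hne ⟨z, hz⟩⟩

lemma subtree_cone (hw : ∀ t : α, IsWellOrder {s : α // s < t} (fun a b => a.1 < b.1))
    (hht : ∀ t : α, treeHeight t < omega1)
    (hA : ∀ A : Set α, IsAntichain (· ≤ ·) A → A.Countable)
    {U : Set α} (hUc : ¬U.Countable) (hUd : ∀ s t : α, s ≤ t → t ∈ U → s ∈ U) :
    ∃ x : α, {y : α | x ≤ y} ⊆ U := by
  by_contra h
  push_neg at h
  set A : Set α := {m | m ∉ U ∧ ∀ z, z < m → z ∈ U} with hAdef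
  have hanti : IsAntichain (· ≤ ·) A := by
    intro a ha b hb hne hab
    exact ha.1 (hb.2 a (lt_of_le_of_ne hab hne))
  have hAc : A.Countable := hA A hanti
  -- every element of U is strictly below some element of A
  have key : ∀ x ∈ U, ∃ m ∈ A, x < m := by
    intro x hx
    obtain ⟨y, hxy, hyU⟩ := Set.not_subset.1 (h x)
    obtain ⟨m, hmy, hmU, hmmin⟩ := exists_min_notin hw hyU
    have hcomp := preds_comparable hw (show x ≤ y from hxy) hmy
    rcases hcomp with hcomp | hcomp
    · exact ⟨m, ⟨hmU, hmmin⟩, lt_of_le_of_ne hcomp (fun e => hmU (e ▸ hx))⟩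
    · exact absurd (hUd m x hcomp hx) hmU
  have : U ⊆ ⋃ m ∈ A, {z : α | z < m} := by
    intro x hx
    obtain ⟨m, hm, hxm⟩ := key x hx
    exact Set.mem_biUnion hm hxm
  exact hUc (Set.Countable.mono this (hAc.biUnion fun m _ => preds_countable hw hht m))

lemma antichain_countable (hw : ∀ t : α, IsWellOrder {s : α // s < t} (fun a b => a.1 < b.1))
    (hlev : ∀ β : Ordinal, {t : α | treeHeight t = β}.Countable)
    (hcone : ∀ U : Set α, (¬U.Countable ∧ ∀ s t : α, s ≤ t → t ∈ U → s ∈ U) →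
      ∃ x : α, {y : α | x ≤ y} ⊆ U)
    (A : Set α) (hanti : IsAntichain (· ≤ ·) A) : A.Countable := by
  by_contra hAc
  have hunb : ∀ β : Ordinal, β < omega1 → ∃ a ∈ A, β < treeHeight a := by
    intro β hβ
    by_contra hb
    push_neg at hb
    exact hAc (Set.Countable.mono (fun a ha => hb a ha) (heights_le_countable hlev hβ))
  set U : Set α := {t | ∃ a ∈ A, t < a} with hUdef
  have hUd : ∀ s t : α, s ≤ t → t ∈ U → s ∈ U := by
    rintro s t hst ⟨a, ha, hta⟩
    exact ⟨a, ha, lt_of_le_of_lt hst hta⟩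
  have hUc : ¬U.Countable := by
    intro hc
    apply Iio_omega1_uncountable
    refine Set.Countable.mono ?_ (hc.image treeHeight)
    intro β hβ
    obtain ⟨a, ha, hβa⟩ := hunb β hβ
    obtain ⟨s, hsa, hsh⟩ := exists_pred_height hw hβa
    exact ⟨s, ⟨a, ha, hsa⟩, hsh⟩
  obtain ⟨x, hx⟩ := hcone U ⟨hUc, hUd⟩
  obtain ⟨a₀, ha₀, hxa₀⟩ := hx (le_refl x)
  obtain ⟨a₁, ha₁, ha₀₁⟩ := hx (show x ≤ a₀ from hxa₀.le)
  exact hanti ha₀ ha₁ (ne_of_lt ha₀₁) ha₀₁.le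

end Helpers

/-- An ω₁-tree `S` is Suslin (no uncountable chain and no uncountable
antichain) if and only if `S` contains no uncountable chain and every subtree of `S`
contains a cone `{y | x ≤ y}` for some `x ∈ S`. -/
theorem stmt5 {α : Type} [PartialOrder α] (hS : IsOmega1Tree α) :
    ((∀ c : Set α, IsChain (· ≤ ·) c → c.Countable) ∧
     (∀ A : Set α, IsAntichain (· ≤ ·) A → A.Countable)) ↔
    ((∀ c : Set α, IsChain (· ≤ ·) c → c.Countable) ∧
     (∀ U : Set α, IsSubtree U → ∃ x : α, {y : α | x ≤ y} ⊆ U)) := by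
  constructor
  · rintro ⟨hc, ha⟩
    exact ⟨hc, fun U hU => subtree_cone hS.1 hS.2.1 ha hU.1 hU.2⟩
  · rintro ⟨hc, hcone⟩
    exact ⟨hc, fun A hA =>
      antichain_countable hS.1 hS.2.2.2 (fun U hU => hcone U hU) A hA⟩

end
end

section
/- Let T be a special coherent Aronszajn tree and let n be a positive natural number. Suppose {X_α : α ∈ ω₁} is a family of elements of T^⊗n such that for all α ≠ β, no coordinate of X_α is equal to a coordinate of X_β. Then there is an uncountable set B ⊆ ω₁ such that for all α < β in B: every coordinate of X_α is incomparable in T with every coordinate of X_β, and for all i < j < n, Δ(X_α(i), X_β(i)) = Δ(X_α(j), X_β(j)). -/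
noncomputable section

/-- `f` codes an element of `2^{<ω₁}` (before requiring a countable domain):
a partial function from the ordinals to `Bool` whose domain is a proper
initial segment of the ordinals. -/
def IsISeq (f : Ordinal → Option Bool) : Prop :=
  ∃ β : Ordinal, ∀ γ : Ordinal, (f γ).isSome ↔ γ < β

/-- Elements of the tree of binary sequences indexed by an initial segment of
the ordinals. -/
def BSeq := {f : Ordinal → Option Bool // IsISeq f}

/-- The domain (length, i.e. height in `2^{<ω₁}`) of a binary sequence. -/
def sdom (f : BSeq) : Ordinal := sInf {γ : Ordinal | f.1 γ = none}

/-- The tree order on binary sequences: extension. -/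
def sle (f g : BSeq) : Prop := ∀ γ : Ordinal, f.1 γ ≠ none → g.1 γ = f.1 γ

/-- Two sequences are incomparable if neither extends the other. -/
def Incomp (f g : BSeq) : Prop := ¬ sle f g ∧ ¬ sle g f

/-- The restriction `f↾β` of a sequence `f` to `β`. -/
def srestrict (f : BSeq) (β : Ordinal) : BSeq :=
  ⟨fun γ => if γ < β then f.1 γ else none, by
    obtain ⟨δ, hδ⟩ := f.2
    refine ⟨min β δ, fun γ => ?_⟩
    by_cases h : γ < β
    · simp [h, hδ γ, lt_min_iff]
    · simp [h, lt_min_iff]⟩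

/-- `Δ(f,g)`: the least ordinal in the common domain at which `f` and `g` differ. -/
def sDelta (f g : BSeq) : Ordinal :=
  sInf {γ : Ordinal | (f.1 γ).isSome ∧ (g.1 γ).isSome ∧ f.1 γ ≠ g.1 γ}

/-- The meet `f ∧ g = f↾Δ(f,g)` of two sequences. -/
def smeet (f g : BSeq) : BSeq := srestrict f (sDelta f g)

/-- `Δ(Z,t) = {Δ(s,t) : s ∈ Z incomparable with t}`. -/
def sDeltaSet (Z : Set BSeq) (t : BSeq) : Set Ordinal :=
  {γ | ∃ s ∈ Z, Incomp s t ∧ sDelta s t = γ}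

/-- A downward-closed subset of `2^{<ω₁}`. -/
def DownClosed (T : Set BSeq) : Prop := ∀ s ∈ T, ∀ t : BSeq, sle t s → t ∈ T

/-- Coherence: any two members of `T` differ at only finitely many places of their
common domain. -/
def Coherent (T : Set BSeq) : Prop :=
  ∀ s ∈ T, ∀ t ∈ T,
    {γ : Ordinal | (s.1 γ).isSome ∧ (t.1 γ).isSome ∧ s.1 γ ≠ t.1 γ}.Finite

/-- `T` is a special coherent Aronszajn tree: a downward-closed coherent subtree of
`2^{<ω₁}` of height ω₁ with countable levels, no uncountable chain, which is the
union of countably many antichains. -/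
def SpecialCoherentAronszajn (T : Set BSeq) : Prop :=
  DownClosed T ∧ Coherent T ∧
  (∀ s ∈ T, sdom s < omega1) ∧
  (∀ β : Ordinal, β < omega1 → ∃ s ∈ T, sdom s = β) ∧
  (∀ β : Ordinal, {s : BSeq | s ∈ T ∧ sdom s = β}.Countable) ∧
  (∀ c : Set BSeq, c ⊆ T → IsChain sle c → c.Countable) ∧
  (∃ A : ℕ → Set BSeq, (∀ n, IsAntichain sle (A n)) ∧ T ⊆ ⋃ n, A n)

/-- `X` is a member of the product tree `T^⊗n`: an `n`-tuple of members of `T`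
all of the same height. -/
def TupleIn (T : Set BSeq) (n : ℕ) (X : Fin n → BSeq) : Prop :=
  (∀ i, X i ∈ T) ∧ ∀ i j, sdom (X i) = sdom (X j)

/-- `K(X)`: the set of `γ` below the height of `X` with `X(i)↾γ ∈ K` for all `i`. -/
def KX (K : Set BSeq) {n : ℕ} (X : Fin n → BSeq) : Set Ordinal :=
  {γ | (∀ i, γ < sdom (X i)) ∧ ∀ i, srestrict (X i) γ ∈ K}

/-- `R^n_Z`: the set of `X ∈ T^⊗n` such that for some `t` in the downward closure of
`Z` of the same height as `X`, `Δ(Z,t) ∩ K(X) = ∅`. -/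
def RnZ (K T : Set BSeq) (n : ℕ) (Z : Set BSeq) : Set (Fin n → BSeq) :=
  {X | TupleIn T n X ∧ ∃ t : BSeq, (∃ z ∈ Z, sle t z) ∧
        (∀ i, sdom t = sdom (X i)) ∧ sDeltaSet Z t ∩ KX K X = ∅}

/-- A subtree of `T^⊗n`: an uncountable downward-closed subset of the product tree. -/
def IsProdSubtree (T : Set BSeq) (n : ℕ) (S : Set (Fin n → BSeq)) : Prop :=
  (∀ X ∈ S, TupleIn T n X) ∧ ¬S.Countable ∧
  ∀ X Y : Fin n → BSeq, TupleIn T n X → (∀ i, sle (X i) (Y i)) → Y ∈ S → X ∈ S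

/-- `𝓡_n`: the set of subtrees of `T^⊗n` of the form `R^n_Z` for an uncountable
`Z ⊆ T`. -/
def Rfam (K T : Set BSeq) (n : ℕ) : Set (Set (Fin n → BSeq)) :=
  {R | IsProdSubtree T n R ∧ ∃ Z : Set BSeq, Z ⊆ T ∧ ¬Z.Countable ∧ R = RnZ K T n Z}

/-- `𝓡_n^⊥`: the set of subtrees of `T^⊗n` almost disjoint from every member
of `𝓡_n`. -/
def RfamPerp (K T : Set BSeq) (n : ℕ) : Set (Set (Fin n → BSeq)) :=
  {S | IsProdSubtree T n S ∧ ∀ R ∈ Rfam K T n, (S ∩ R).Countable}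


namespace S6
open scoped Classical

/-! ### basic facts about `BSeq` -/

lemma sdom_eq (f : BSeq) {β : Ordinal} (h : ∀ γ, (f.1 γ).isSome ↔ γ < β) : sdom f = β := by
  have : {γ : Ordinal | f.1 γ = none} = Set.Ici β := by
    ext γ
    simp only [Set.mem_setOf_eq, Set.mem_Ici]
    constructor
    · intro hn
      by_contra hlt
      have := (h γ).2 (lt_of_not_ge hlt)
      rw [hn] at this; simp at this
    · intro hge
      rcases Option.eq_none_or_eq_some (f.1 γ) with h0 | ⟨b, hb⟩
      · exact h0
      · exfalso
        have : γ < β := (h γ).1 (by simp [hb])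
        exact absurd this (not_lt.2 hge)
  rw [sdom, this, csInf_Ici]

lemma isSome_iff_lt_sdom (f : BSeq) (γ : Ordinal) : (f.1 γ).isSome ↔ γ < sdom f := by
  obtain ⟨β, hβ⟩ := f.2
  rw [sdom_eq f hβ]; exact hβ γ

lemma ne_none_iff_lt_sdom (f : BSeq) (γ : Ordinal) : f.1 γ ≠ none ↔ γ < sdom f := by
  rw [← isSome_iff_lt_sdom, Option.isSome_iff_ne_none]

lemma sle_eq {f g : BSeq} (h : sle f g) {γ : Ordinal} (hγ : γ < sdom f) : g.1 γ = f.1 γ :=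
  h γ ((ne_none_iff_lt_sdom f γ).2 hγ)

lemma sle_of_two {f g k : BSeq} (hf : sle f k) (hg : sle g k) (hd : sdom f ≤ sdom g) :
    sle f g := by
  intro γ hγ
  have hγf : γ < sdom f := (ne_none_iff_lt_sdom f γ).1 hγ
  rw [← sle_eq hg (lt_of_lt_of_le hγf hd), sle_eq hf hγf]

lemma srestrict_apply (f : BSeq) (β γ : Ordinal) :
    (srestrict f β).1 γ = if γ < β then f.1 γ else none := rfl

lemma sdom_srestrict (f : BSeq) {β : Ordinal} (h : β ≤ sdom f) :
    sdom (srestrict f β) = β := by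
  apply sdom_eq
  intro γ
  rw [srestrict_apply]
  by_cases hγ : γ < β
  · simp only [hγ, if_true, iff_true]
    exact (isSome_iff_lt_sdom f γ).2 (lt_of_lt_of_le hγ h)
  · simp [hγ]

lemma sle_srestrict (f : BSeq) (β : Ordinal) : sle (srestrict f β) f := by
  intro γ hγ
  rw [srestrict_apply] at hγ ⊢
  by_cases h : γ < β
  · simp [h]
  · simp [h] at hγ

lemma exists_common_diff {s t : BSeq} (h1 : ¬ sle s t) (h2 : ¬ sle t s) :
    ∃ γ, s.1 γ ≠ t.1 γ ∧ s.1 γ ≠ none ∧ t.1 γ ≠ none := by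
  rw [sle] at h1 h2
  push_neg at h1 h2
  obtain ⟨γ1, hγ1n, hγ1d⟩ := h1
  rcases Option.eq_none_or_eq_some (t.1 γ1) with htn | ⟨b1, htv⟩
  · have hts : sdom t < sdom s := by
      have h1' : γ1 < sdom s := (ne_none_iff_lt_sdom s γ1).1 hγ1n
      have h2' : ¬ γ1 < sdom t := fun h => ((ne_none_iff_lt_sdom t γ1).2 h) htn
      exact lt_of_le_of_lt (not_lt.1 h2') h1'
    obtain ⟨γ2, hγ2n, hγ2d⟩ := h2
    have hγ2t : γ2 < sdom t := (ne_none_iff_lt_sdom t γ2).1 hγ2n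
    have hγ2s : γ2 < sdom s := hγ2t.trans hts
    exact ⟨γ2, hγ2d, (ne_none_iff_lt_sdom s γ2).2 hγ2s, hγ2n⟩
  · exact ⟨γ1, fun h => hγ1d h.symm, hγ1n, by simp [htv]⟩

/-- extend a sequence by one value on top -/
def extend (f : BSeq) (v : Bool) : BSeq :=
  ⟨fun γ => if γ = sdom f then some v else f.1 γ, by
    refine ⟨sdom f + 1, fun γ => ?_⟩
    by_cases h : γ = sdom f
    · subst h; simp [Order.lt_add_one_iff]
    · simp only [h, if_false]
      rw [isSome_iff_lt_sdom]
      constructor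
      · intro hlt; exact hlt.trans (lt_add_one _)
      · intro hlt
        rcases (Order.lt_add_one_iff.1 hlt).lt_or_eq with h' | h'
        · exact h'
        · exact absurd h' h⟩

lemma extend_apply (f : BSeq) (v : Bool) (γ : Ordinal) :
    (extend f v).1 γ = if γ = sdom f then some v else f.1 γ := rfl

/-! ### countability tools -/

lemma countable_Iio_of_lt_omega1 {o : Ordinal} (h : o < omega1) :
    (Set.Iio o).Countable := by
  rw [Cardinal.countable_iff_lt_aleph_one, Ordinal.mk_Iio_ordinal]
  have h1 : o.card < Cardinal.aleph 1 := Cardinal.lt_ord.1 h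
  calc Cardinal.lift o.card < Cardinal.lift (Cardinal.aleph 1) := Cardinal.lift_lt.2 h1
  _ = _ := by rw [Cardinal.lift_aleph, Ordinal.lift_one]

lemma not_countable_Iio_omega1 : ¬ (Set.Iio omega1).Countable := by
  rw [Cardinal.countable_iff_lt_aleph_one, Ordinal.mk_Iio_ordinal]
  simp only [omega1, Cardinal.card_ord]
  rw [Cardinal.lift_aleph, Ordinal.lift_one]
  exact lt_irrefl _

lemma fiber_uncountable {α : Type*} {β : Type*} [Countable β] {S : Set α}
    (hS : ¬ S.Countable) (f : α → β) : ∃ b, ¬ {x | x ∈ S ∧ f x = b}.Countable := by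
  by_contra hc
  push_neg at hc
  apply hS
  have : S ⊆ ⋃ b : β, {x | x ∈ S ∧ f x = b} := fun x hx => Set.mem_iUnion.2 ⟨f x, hx, rfl⟩
  exact (Set.countable_iUnion hc).mono this

lemma fiber_uncountable_set {S : Set Ordinal} (hS : ¬ S.Countable) (f : Ordinal → Ordinal)
    (I : Set Ordinal) (hI : I.Countable) (hf : ∀ x ∈ S, f x ∈ I) :
    ∃ γ ∈ I, ¬ {x | x ∈ S ∧ f x = γ}.Countable := by
  by_contra hc
  push_neg at hc
  apply hS
  have : S ⊆ ⋃ γ ∈ I, {x | x ∈ S ∧ f x = γ} := fun x hx => by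
    simp only [Set.mem_iUnion]
    exact ⟨f x, hf x hx, hx, rfl⟩
  exact (Set.Countable.biUnion hI fun γ hγ => hc γ hγ).mono this

section core

variable {n : ℕ} (X : Ordinal → Fin n → BSeq)

/-- the set of levels at which two coordinates of the tuple `X a` differ -/
def Gset (a : Ordinal) : Set Ordinal :=
  {γ | ∃ c c' : Fin n, (X a c).1 γ ≠ (X a c').1 γ}

/-- the set of common levels at which the tuples `X a` and `X b` differ -/
def Mset (a b : Ordinal) : Set Ordinal :=
  {γ | ∃ c : Fin n, (X a c).1 γ ≠ (X b c).1 γ ∧ (X a c).1 γ ≠ none ∧ (X b c).1 γ ≠ none}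

/-- the first level at which the tuples `X a` and `X b` differ -/
def mval (a b : Ordinal) : Ordinal := sInf (Mset X a b)

lemma Mset_symm (a b : Ordinal) : Mset X a b = Mset X b a := by
  ext γ; constructor <;> rintro ⟨c, h1, h2, h3⟩ <;> exact ⟨c, h1.symm, h3, h2⟩

lemma mval_symm (a b : Ordinal) : mval X a b = mval X b a := by
  rw [mval, Mset_symm]; rfl

/-- the pair `(a,b)` is bad if the first difference level of the two tuples is an
internal difference level of one of them -/
def Dpair (a b : Ordinal) : Prop := b ≠ a ∧ mval X a b ∈ Gset X a ∪ Gset X b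

lemma Dpair_symm {a b : Ordinal} (h : Dpair X a b) : Dpair X b a := by
  obtain ⟨h1, h2⟩ := h
  refine ⟨h1.symm, ?_⟩
  rw [mval_symm X b a, Set.union_comm]
  exact h2

def Gfin (a : Ordinal) : Finset Ordinal :=
  if h : (Gset X a).Finite then h.toFinset else ∅

lemma mem_Gfin {a : Ordinal} (hfin : (Gset X a).Finite) (γ : Ordinal) :
    γ ∈ Gfin X a ↔ γ ∈ Gset X a := by
  rw [Gfin, dif_pos hfin, Set.Finite.mem_toFinset]

def glist (a : Ordinal) : List Ordinal := (Gfin X a).sort (· ≤ ·)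

def gfun (a : Ordinal) (j : ℕ) : Ordinal := (glist X a).getD j 0

lemma exists_gfun {a γ : Ordinal} (hγ : γ ∈ Gfin X a) :
    ∃ j : ℕ, j < (Gfin X a).card ∧ gfun X a j = γ := by
  have hmem : γ ∈ glist X a := (Finset.mem_sort (α := Ordinal) (· ≤ ·)).2 hγ
  obtain ⟨j, hj, hget⟩ := List.mem_iff_getElem.1 hmem
  have hlen : (glist X a).length = (Gfin X a).card := Finset.length_sort _
  refine ⟨j, by rwa [hlen] at hj, ?_⟩
  rw [gfun, List.getD_eq_getElem _ _ hj, hget]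

variable (T : Set BSeq)

lemma sdom_tuple {a : Ordinal} (htup : TupleIn T n (X a)) (c c' : Fin n) :
    sdom (X a c) = sdom (X a c') := htup.2 c c'

lemma Gset_lt {a : Ordinal} (htup : TupleIn T n (X a)) {γ : Ordinal} (hγ : γ ∈ Gset X a)
    (c : Fin n) : γ < sdom (X a c) := by
  obtain ⟨c1, c2, hne⟩ := hγ
  rcases Option.eq_none_or_eq_some ((X a c1).1 γ) with h1 | ⟨b1, h1⟩
  · have h2 : (X a c2).1 γ ≠ none := fun h => hne (h1.trans h.symm)
    have := (ne_none_iff_lt_sdom _ _).1 h2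
    rwa [sdom_tuple X T htup c2 c] at this
  · have h1' : (X a c1).1 γ ≠ none := by simp [h1]
    have := (ne_none_iff_lt_sdom _ _).1 h1'
    rwa [sdom_tuple X T htup c1 c] at this

lemma Gset_finite {a : Ordinal} (hcoh : Coherent T) (htup : TupleIn T n (X a)) :
    (Gset X a).Finite := by
  have hsub : Gset X a ⊆ ⋃ c1 : Fin n, ⋃ c2 : Fin n,
      {γ | ((X a c1).1 γ).isSome ∧ ((X a c2).1 γ).isSome ∧ (X a c1).1 γ ≠ (X a c2).1 γ} := by
    intro γ hγ
    obtain ⟨c1, c2, hne⟩ := hγ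
    have hlt1 : γ < sdom (X a c1) := Gset_lt X T htup ⟨c1, c2, hne⟩ c1
    have hlt2 : γ < sdom (X a c2) := Gset_lt X T htup ⟨c1, c2, hne⟩ c2
    refine Set.mem_iUnion.2 ⟨c1, Set.mem_iUnion.2 ⟨c2, ?_⟩⟩
    exact ⟨(isSome_iff_lt_sdom _ _).2 hlt1, (isSome_iff_lt_sdom _ _).2 hlt2, hne⟩
  exact (Set.finite_iUnion fun c1 => Set.finite_iUnion fun c2 =>
    hcoh _ (htup.1 c1) _ (htup.1 c2)).subset hsub

lemma mval_mem {a b : Ordinal} (hne : (Mset X a b).Nonempty) : mval X a b ∈ Mset X a b :=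
  csInf_mem hne

lemma mval_lt_sdom {a b : Ordinal} (hne : (Mset X a b).Nonempty)
    (htupa : TupleIn T n (X a)) (htupb : TupleIn T n (X b)) (c : Fin n) :
    mval X a b < sdom (X a c) ∧ mval X a b < sdom (X b c) := by
  obtain ⟨c0, _, h2, h3⟩ := mval_mem X hne
  constructor
  · rw [sdom_tuple X T htupa c c0]; exact (ne_none_iff_lt_sdom _ _).1 h2
  · rw [sdom_tuple X T htupb c c0]; exact (ne_none_iff_lt_sdom _ _).1 h3

lemma lt_mval_eq {a b γ : Ordinal} (hγ : γ < mval X a b) (c : Fin n)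
    (ha : γ < sdom (X a c)) (hb : γ < sdom (X b c)) :
    (X a c).1 γ = (X b c).1 γ := by
  by_contra hne
  have : γ ∈ Mset X a b :=
    ⟨c, hne, (ne_none_iff_lt_sdom _ _).2 ha, (ne_none_iff_lt_sdom _ _).2 hb⟩
  exact absurd (csInf_le (OrderBot.bddBelow _) this) (not_le.2 hγ)

/-- the key local consequence: if `mval` avoids both internal difference sets then
all coordinates are pairwise incomparable and all the `sDelta`s agree. -/
lemma bullets {a b : Ordinal} (htupa : TupleIn T n (X a)) (htupb : TupleIn T n (X b))
    (hne : (Mset X a b).Nonempty) (hGa : mval X a b ∉ Gset X a) (hGb : mval X a b ∉ Gset X b) :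
    (∀ i j : Fin n, Incomp (X a i) (X b j)) ∧
      (∀ i j : Fin n, sDelta (X a i) (X b i) = sDelta (X a j) (X b j)) := by
  set m := mval X a b with hm
  obtain ⟨c0, hd0, ha0, hb0⟩ := mval_mem X hne
  have hlta : ∀ c : Fin n, m < sdom (X a c) := fun c =>
    (mval_lt_sdom X T hne htupa htupb c).1
  have hltb : ∀ c : Fin n, m < sdom (X b c) := fun c =>
    (mval_lt_sdom X T hne htupa htupb c).2
  have va : ∀ c : Fin n, (X a c).1 m = (X a c0).1 m := by
    intro c; by_contra h; exact hGa ⟨c, c0, h⟩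
  have vb : ∀ c : Fin n, (X b c).1 m = (X b c0).1 m := by
    intro c; by_contra h; exact hGb ⟨c, c0, h⟩
  have key : ∀ i j : Fin n, (X a i).1 m ≠ (X b j).1 m := by
    intro i j
    rw [va i, vb j]; exact hd0
  constructor
  · intro i j
    constructor
    · intro hsle
      have := sle_eq hsle (hlta i)
      exact key i j this.symm
    · intro hsle
      have := sle_eq hsle (hltb j)
      exact key i j this
  · have : ∀ c : Fin n, sDelta (X a c) (X b c) = m := by
      intro c
      have hmem : m ∈ {γ : Ordinal | ((X a c).1 γ).isSome ∧ ((X b c).1 γ).isSome ∧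
          (X a c).1 γ ≠ (X b c).1 γ} :=
        ⟨(isSome_iff_lt_sdom _ _).2 (hlta c), (isSome_iff_lt_sdom _ _).2 (hltb c), key c c⟩
      apply le_antisymm
      · exact csInf_le (OrderBot.bddBelow _) hmem
      · apply le_csInf ⟨m, hmem⟩
        rintro γ ⟨h1, h2, h3⟩
        exact csInf_le (OrderBot.bddBelow _)
          ⟨c, h3, (Option.isSome_iff_ne_none).1 h1, (Option.isSome_iff_ne_none).1 h2⟩
    intro i j; rw [this i, this j]

variable (idx : BSeq → ℕ) (A : ℕ → Set BSeq)

def GoalP : Prop :=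
  ∃ B : Set Ordinal, B ⊆ Set.Iio omega1 ∧ ¬B.Countable ∧
    ∀ a ∈ B, ∀ b ∈ B, a < b →
      (∀ i j : Fin n, Incomp (X a i) (X b j)) ∧
      (∀ i j : Fin n, i < j → sDelta (X a i) (X b i) = sDelta (X a j) (X b j))

lemma Mset_nonempty (hn : 0 < n) (hA : ∀ q : ℕ, IsAntichain sle (A q))
    (hidx : ∀ s ∈ T, s ∈ A (idx s)) {a b : Ordinal}
    (htupa : TupleIn T n (X a)) (htupb : TupleIn T n (X b))
    (hneq : X a ⟨0, hn⟩ ≠ X b ⟨0, hn⟩)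
    (hv : idx (X a ⟨0, hn⟩) = idx (X b ⟨0, hn⟩)) : (Mset X a b).Nonempty := by
  have hsmem : X a ⟨0, hn⟩ ∈ A (idx (X a ⟨0, hn⟩)) := hidx _ (htupa.1 _)
  have htmem : X b ⟨0, hn⟩ ∈ A (idx (X a ⟨0, hn⟩)) := by rw [hv]; exact hidx _ (htupb.1 _)
  have h1 : ¬ sle (X a ⟨0, hn⟩) (X b ⟨0, hn⟩) := (hA _) hsmem htmem hneq
  have h2 : ¬ sle (X b ⟨0, hn⟩) (X a ⟨0, hn⟩) := (hA _) htmem hsmem hneq.symm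
  obtain ⟨γ, hd, hs, ht⟩ := exists_common_diff h1 h2
  exact ⟨γ, ⟨0, hn⟩, hd, hs, ht⟩

lemma fertile_goal (hn : 0 < n) (S' : Set Ordinal) (hsub : S' ⊆ Set.Iio omega1)
    (htup : ∀ a ∈ S', TupleIn T n (X a))
    (hpairs : ∀ a ∈ S', ∀ b ∈ S', a ≠ b → (Mset X a b).Nonempty)
    (hfert : ¬ {a | a ∈ S' ∧ {x | x ∈ S' ∧ Dpair X a x}.Countable}.Countable) :
    GoalP X := by
  set Good := {a | a ∈ S' ∧ {x | x ∈ S' ∧ Dpair X a x}.Countable} with hGood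
  have hGoodsub : Good ⊆ S' := fun a ha => ha.1
  set 𝒮 := {B : Set Ordinal | B ⊆ Good ∧ ∀ a ∈ B, ∀ b ∈ B, a ≠ b → ¬ Dpair X a b} with h𝒮
  obtain ⟨B, hBmax⟩ := zorn_subset 𝒮 (by
    intro c hc hchain
    refine ⟨⋃₀ c, ⟨?_, ?_⟩, fun s hs => Set.subset_sUnion_of_mem hs⟩
    · exact Set.sUnion_subset fun s hs => (hc hs).1
    · rintro a ⟨sa, hsa, ha⟩ b ⟨sb, hsb, hb⟩ hab
      rcases hchain.total hsa hsb with h | h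
      · exact (hc hsb).2 a (h ha) b hb hab
      · exact (hc hsa).2 a ha b (h hb) hab)
  have hBS : B ∈ 𝒮 := hBmax.1
  have hBc : ¬ B.Countable := by
    intro hBc
    have hbadc : (B ∪ ⋃ a ∈ B, {x | x ∈ S' ∧ Dpair X a x}).Countable := by
      refine hBc.union (Set.Countable.biUnion hBc fun a ha => ?_)
      exact (hBS.1 ha).2
    have hne : (Good \ (B ∪ ⋃ a ∈ B, {x | x ∈ S' ∧ Dpair X a x})).Nonempty := by
      rw [Set.nonempty_iff_ne_empty]
      intro h
      apply hfert
      have : Good ⊆ B ∪ ⋃ a ∈ B, {x | x ∈ S' ∧ Dpair X a x} := by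
        intro y hy
        by_contra hy2
        exact Set.eq_empty_iff_forall_notMem.1 h y ⟨hy, hy2⟩
      exact hbadc.mono this
    obtain ⟨x, hxG, hxbad⟩ := hne
    have hxB : x ∉ B := fun h => hxbad (Or.inl h)
    have hins : insert x B ∈ 𝒮 := by
      constructor
      · exact Set.insert_subset hxG hBS.1
      · intro a ha b hb hab
        rcases ha with rfl | ha
        · rcases hb with rfl | hb
          · exact absurd rfl hab
          · intro hD
            apply hxbad
            right
            exact Set.mem_biUnion hb ⟨hGoodsub hxG, Dpair_symm X hD⟩
        · rcases hb with rfl | hb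
          · intro hD
            apply hxbad
            right
            exact Set.mem_biUnion ha ⟨hGoodsub hxG, hD⟩
          · exact hBS.2 a ha b hb hab
    have := hBmax.2 hins (Set.subset_insert x B)
    exact hxB (this (Set.mem_insert x B))
  refine ⟨B, fun a ha => hsub (hGoodsub (hBS.1 ha)), hBc, ?_⟩
  intro a ha b hb hab
  have haS : a ∈ S' := hGoodsub (hBS.1 ha)
  have hbS : b ∈ S' := hGoodsub (hBS.1 hb)
  have hnd : ¬ Dpair X a b := hBS.2 a ha b hb hab.ne
  rw [Dpair] at hnd
  push_neg at hnd
  have hm : mval X a b ∉ Gset X a ∪ Gset X b := hnd hab.ne'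
  obtain ⟨h1, h2⟩ := bullets X T (htup a haS) (htup b hbS)
    (hpairs a haS b hbS hab.ne) (fun h => hm (Or.inl h)) (fun h => hm (Or.inr h))
  exact ⟨h1, fun i j _ => h2 i j⟩

def nodeC (a : Ordinal) (j : ℕ) (w : Fin n → Bool) (c : Fin n) : BSeq :=
  extend (srestrict (X a c) (gfun X a j)) (w c)

def Mfun (a : Ordinal) (j : ℕ) (w : Fin n → Bool) (c : Fin n) : Option ℕ :=
  if nodeC X a j w c ∈ T then some (idx (nodeC X a j w c)) else none

variable (k : ℕ) (M' : ℕ → (Fin n → Bool) → Fin n → Option ℕ)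

def Cfg (S₀ : Set Ordinal) (l : ℕ) : Prop :=
  ∃ (S' : Set Ordinal) (N : ℕ → Fin n → BSeq) (pos : ℕ → ℕ × (Fin n → Bool))
    (hts : ℕ → Ordinal),
    S' ⊆ S₀ ∧ ¬S'.Countable ∧
    (∀ i < l, (pos i).1 < k) ∧
    (∀ i < l, ∀ c, N i c ∈ T) ∧
    (∀ i < l, ∀ c, sdom (N i c) = hts i) ∧
    (∀ i j : ℕ, i < j → j < l → hts i < hts j) ∧
    (∀ i < l, ∀ c, M' (pos i).1 (pos i).2 c = some (idx (N i c))) ∧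
    (∀ b ∈ S', ∀ i < l, ∀ c, sle (N i c) (X b c))

lemma cfg_contra (hn : 0 < n) (hA : ∀ q : ℕ, IsAntichain sle (A q))
    (hidx : ∀ s ∈ T, s ∈ A (idx s)) {S₀ : Set Ordinal}
    (h : Cfg X T idx k M' S₀ (k * 2 ^ n + 1)) : False := by
  obtain ⟨S', N, pos, hts, hsub, hunc, hposk, hinT, hsd, hmono, htag, hext⟩ := h
  set L := k * 2 ^ n with hL
  have hSne : S'.Nonempty := by
    rw [Set.nonempty_iff_ne_empty]
    intro hE; rw [hE] at hunc; exact hunc Set.countable_empty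
  obtain ⟨b, hb⟩ := hSne
  have key : ∀ i i' : ℕ, i < i' → i' < L + 1 → (pos i).1 = (pos i').1 →
      (pos i).2 = (pos i').2 → False := by
    intro i i' hlt hi' hp1 hp2
    have hi : i < L + 1 := hlt.trans hi'
    set c0 : Fin n := ⟨0, hn⟩
    set s := N i c0 with hs
    set t := N i' c0 with ht
    have hsles : sle s (X b c0) := hext b hb i hi c0
    have hslet : sle t (X b c0) := hext b hb i' hi' c0
    have hhts : hts i < hts i' := hmono i i' hlt hi'
    have hsd1 : sdom s = hts i := hsd i hi c0
    have hsd2 : sdom t = hts i' := hsd i' hi' c0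
    have hle : sle s t := sle_of_two hsles hslet (by rw [hsd1, hsd2]; exact hhts.le)
    have hne : s ≠ t := by
      intro hEq
      rw [hEq, hsd2] at hsd1
      exact absurd hsd1 hhts.ne'
    have hidxeq : idx s = idx t := by
      have e1 : M' (pos i).1 (pos i).2 c0 = some (idx s) := htag i hi c0
      have e2 : M' (pos i).1 (pos i).2 c0 = some (idx t) := by
        rw [hp1, hp2]; exact htag i' hi' c0
      exact Option.some.inj (e1.symm.trans e2)
    have hmems : s ∈ A (idx s) := hidx s (hinT i hi c0)
    have hmemt : t ∈ A (idx s) := by rw [hidxeq]; exact hidx t (hinT i' hi' c0)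
    exact (hA (idx s)) hmems hmemt hne hle
  have hcard : Fintype.card (Fin k × (Fin n → Bool)) < Fintype.card (Fin (L + 1)) := by
    simp [Fintype.card_fun, hL]
  obtain ⟨i, i', hne, heq⟩ := Fintype.exists_ne_map_eq_of_card_lt
    (fun i : Fin (L + 1) => ((⟨(pos i).1, hposk i i.isLt⟩ : Fin k), (pos i).2)) hcard
  have hp1 : (pos i).1 = (pos i').1 := by
    have := congrArg (fun p => (Prod.fst p : Fin k).val) heq
    simpa using this
  have hp2 : (pos i).2 = (pos i').2 := by
    have := congrArg Prod.snd heq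
    simpa using this
  rcases Ne.lt_or_gt hne with hlt | hlt
  · exact key i i' hlt i'.isLt hp1 hp2
  · exact key i' i hlt i.isLt hp1.symm hp2.symm

lemma cfg_step (hn : 0 < n)
    (hdc : DownClosed T) (hcoh : Coherent T)
    (hA : ∀ q : ℕ, IsAntichain sle (A q)) (hidx : ∀ s ∈ T, s ∈ A (idx s))
    (hht : ∀ s ∈ T, sdom s < omega1)
    (hX : ∀ a, a < omega1 → TupleIn T n (X a))
    (hdisj : ∀ a, a < omega1 → ∀ b, b < omega1 → a ≠ b → ∀ i j : Fin n, X a i ≠ X b j)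
    {S₀ : Set Ordinal} (hS₀sub : S₀ ⊆ Set.Iio omega1)
    (hS₀v : ∀ a ∈ S₀, ∀ b ∈ S₀, idx (X a ⟨0, hn⟩) = idx (X b ⟨0, hn⟩))
    (hS₀k : ∀ a ∈ S₀, (Gfin X a).card = k)
    (hS₀M : ∀ a ∈ S₀, ∀ j' < k, ∀ (w : Fin n → Bool) (c : Fin n),
      Mfun X T idx a j' w c = M' j' w c)
    (l : ℕ) (hcfg : Cfg X T idx k M' S₀ l) :
    GoalP X ∨ Cfg X T idx k M' S₀ (l + 1) := by
  obtain ⟨S', N, pos, hts, hsub, hunc, hposk, hinT, hsd, hmono, htag, hext⟩ := hcfg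
  have hS'ω : ∀ a ∈ S', a < omega1 := fun a ha => hS₀sub (hsub ha)
  have htupS : ∀ a ∈ S', TupleIn T n (X a) := fun a ha => hX a (hS'ω a ha)
  have hpairs : ∀ a ∈ S', ∀ b ∈ S', a ≠ b → (Mset X a b).Nonempty := by
    intro a ha b hb hne
    exact Mset_nonempty X T idx A hn hA hidx (htupS a ha) (htupS b hb)
      (hdisj a (hS'ω a ha) b (hS'ω b hb) hne _ _)
      (hS₀v a (hsub ha) b (hsub hb))
  by_cases hfert : {a | a ∈ S' ∧ {x | x ∈ S' ∧ Dpair X a x}.Countable}.Countable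
  swap
  · left
    exact fertile_goal X T hn S' (fun x hx => hS₀sub (hsub hx)) htupS hpairs hfert
  right
  have hnotsub : ¬ S' ⊆ {a | a ∈ S' ∧ {x | x ∈ S' ∧ Dpair X a x}.Countable} := by
    intro hss; exact hunc (hfert.mono hss)
  obtain ⟨a, haS, haG⟩ := Set.not_subset.1 hnotsub
  have hDunc : ¬ {x | x ∈ S' ∧ Dpair X a x}.Countable := fun h => haG ⟨haS, h⟩
  have hlep : ∀ x ∈ S', x ≠ a → ∀ i, i < l → hts i ≤ mval X a x := by
    intro x hx hxa i hi
    by_contra hlt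
    push_neg at hlt
    obtain ⟨c, hd, h1, h2⟩ := mval_mem X (hpairs a haS x hx (Ne.symm hxa))
    have e1 : (X a c).1 (mval X a x) = (N i c).1 (mval X a x) :=
      sle_eq (hext a haS i hi c) (by rw [hsd i hi c]; exact hlt)
    have e2 : (X x c).1 (mval X a x) = (N i c).1 (mval X a x) :=
      sle_eq (hext x hx i hi c) (by rw [hsd i hi c]; exact hlt)
    exact hd (e1.trans e2.symm)
  -- the common gate-extension construction
  have common : ∀ (y : Ordinal) (j' : ℕ) (γs : Ordinal) (w : Fin n → Bool)
      (E : Set Ordinal), y ∈ S₀ → j' < k → gfun X y j' = γs →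
      E ⊆ S' → ¬ E.Countable →
      (∀ c, γs < sdom (X y c)) →
      (∀ x ∈ E, ∀ γ, γ < γs → ∀ c, (X x c).1 γ = (X y c).1 γ) →
      (∀ x ∈ E, ∀ c, (X x c).1 γs = some (w c)) →
      (∀ i, i < l → hts i ≤ γs) →
      Cfg X T idx k M' S₀ (l + 1) := by
    intro y j' γs w E hyS0 hj' hgj hEsub hEunc hylt hagree hval hle
    have hEne : E.Nonempty := by
      rw [Set.nonempty_iff_ne_empty]
      intro hE; rw [hE] at hEunc; exact hEunc Set.countable_empty
    obtain ⟨x₀, hx₀⟩ := hEne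
    have hx₀lt : ∀ c, γs < sdom (X x₀ c) := fun c =>
      (ne_none_iff_lt_sdom _ _).1 (by rw [hval x₀ hx₀ c]; simp)
    have hsucc : ∀ c, γs + 1 ≤ sdom (X x₀ c) := fun c => Order.add_one_le_iff.2 (hx₀lt c)
    have hNinT : ∀ c : Fin n, srestrict (X x₀ c) (γs + 1) ∈ T := fun c =>
      hdc (X x₀ c) ((htupS x₀ (hEsub hx₀)).1 c) _ (sle_srestrict _ _)
    refine ⟨E, fun i c => if i = l then srestrict (X x₀ c) (γs + 1) else N i c,
      fun i => if i = l then (j', w) else pos i,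
      fun i => if i = l then γs + 1 else hts i,
      hEsub.trans hsub, hEunc, ?_, ?_, ?_, ?_, ?_, ?_⟩
    · intro i hi
      by_cases h : i = l
      · simp [h, hj']
      · simp only [h, if_false]
        exact hposk i (lt_of_le_of_ne (Nat.lt_succ_iff.1 hi) h)
    · intro i hi c
      by_cases h : i = l
      · simp only [h, if_true]; exact hNinT c
      · simp only [h, if_false]
        exact hinT i (lt_of_le_of_ne (Nat.lt_succ_iff.1 hi) h) c
    · intro i hi c
      by_cases h : i = l
      · simp only [h, if_true]
        exact sdom_srestrict _ (hsucc c)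
      · simp only [h, if_false]
        exact hsd i (lt_of_le_of_ne (Nat.lt_succ_iff.1 hi) h) c
    · intro i j hij hj
      have hinej : i ≠ l := by
        by_cases h : j = l
        · subst h; exact Nat.ne_of_lt hij
        · have hjl : j < l := lt_of_le_of_ne (Nat.lt_succ_iff.1 hj) h
          exact Nat.ne_of_lt (hij.trans hjl)
      by_cases h : j = l
      · subst h
        simp only [hinej, if_false, if_true]
        exact lt_of_le_of_lt (hle i hij) (lt_add_one γs)
      · have hjl : j < l := lt_of_le_of_ne (Nat.lt_succ_iff.1 hj) h
        simp only [hinej, h, if_false]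
        exact hmono i j hij hjl
    · intro i hi c
      by_cases h : i = l
      · subst h
        simp only [if_true]
        have hnodeEq : nodeC X y j' w c = srestrict (X x₀ c) (γs + 1) := by
          apply Subtype.ext
          funext γ
          show (extend (srestrict (X y c) (gfun X y j')) (w c)).1 γ
            = (srestrict (X x₀ c) (γs + 1)).1 γ
          have hsdb : sdom (srestrict (X y c) (gfun X y j')) = γs := by
            rw [hgj]; exact sdom_srestrict _ (le_of_lt (hylt c))
          show (if γ = sdom (srestrict (X y c) (gfun X y j')) then some (w c)
            else (srestrict (X y c) (gfun X y j')).1 γ) = (srestrict (X x₀ c) (γs + 1)).1 γ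
          rw [hsdb, hgj, srestrict_apply, srestrict_apply]
          by_cases hγ : γ = γs
          · subst hγ
            rw [if_pos rfl, if_pos (lt_add_one γ), hval x₀ hx₀ c]
          · rw [if_neg hγ]
            by_cases hlt2 : γ < γs
            · rw [if_pos hlt2, if_pos (hlt2.trans (lt_add_one γs))]
              exact (hagree x₀ hx₀ γ hlt2 c).symm
            · rw [if_neg hlt2, if_neg ?_]
              intro hcon
              rcases (Order.lt_add_one_iff.1 hcon).lt_or_eq with h1 | h1
              · exact hlt2 h1
              · exact hγ h1
        have hMf := hS₀M y hyS0 j' hj' w c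
        rw [Mfun, hnodeEq, if_pos (hNinT c)] at hMf
        exact hMf.symm
      · simp only [h, if_false]
        exact htag i (lt_of_le_of_ne (Nat.lt_succ_iff.1 hi) h) c
    · intro b hb i hi c
      by_cases h : i = l
      · subst h
        simp only [if_true]
        intro γ hγne
        rw [srestrict_apply] at hγne ⊢
        by_cases hlt2 : γ < γs + 1
        · rw [if_pos hlt2]
          rcases (Order.lt_add_one_iff.1 hlt2).lt_or_eq with h1 | h1
          · exact (hagree b hb γ h1 c).trans (hagree x₀ hx₀ γ h1 c).symm
          · subst h1
            rw [hval b hb c, hval x₀ hx₀ c]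
        · rw [if_neg hlt2] at hγne
          exact absurd rfl hγne
      · simp only [h, if_false]
        exact hext b (hEsub hb) i (lt_of_le_of_ne (Nat.lt_succ_iff.1 hi) h) c
  -- split the bad set into the two kinds of gates
  have hDSsplit : ¬ ({x | x ∈ S' ∧ Dpair X a x ∧ mval X a x ∈ Gset X a}.Countable ∧
      {x | x ∈ S' ∧ Dpair X a x ∧ mval X a x ∈ Gset X x}.Countable) := by
    rintro ⟨h1, h2⟩
    apply hDunc
    refine (h1.union h2).mono ?_
    rintro x ⟨hx1, hx2⟩
    rcases hx2.2 with h | h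
    · exact Or.inl ⟨hx1, hx2, h⟩
    · exact Or.inr ⟨hx1, hx2, h⟩
  rcases not_and_or.1 hDSsplit with hD1 | hD2
  · -- gate coming from `Gset a`
    have hGfinite : (Gset X a).Finite := Gset_finite X T hcoh (htupS a haS)
    obtain ⟨γs, hγsG, hE1⟩ := fiber_uncountable_set hD1 (mval X a) (Gset X a)
      hGfinite.countable (fun x hx => hx.2.2)
    obtain ⟨wbar, hE2⟩ := fiber_uncountable hE1 (fun x => (fun c => (X x c).1 γs))
    obtain ⟨j', hj'card, hgj⟩ := exists_gfun X ((mem_Gfin X hGfinite γs).2 hγsG)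
    rw [hS₀k a (hsub haS)] at hj'card
    set E := {x | x ∈ {x | x ∈ {x | x ∈ S' ∧ Dpair X a x ∧ mval X a x ∈ Gset X a} ∧
      mval X a x = γs} ∧ (fun c => (X x c).1 γs) = wbar} with hE
    have hEprop : ∀ x ∈ E, x ∈ S' ∧ x ≠ a ∧ mval X a x = γs ∧
        ∀ c, (X x c).1 γs = wbar c := by
      rintro x ⟨⟨⟨hxS, hxD, _⟩, hxm⟩, hxw⟩
      exact ⟨hxS, hxD.1, hxm, fun c => congrFun hxw c⟩
    have hEne : E.Nonempty := by
      rw [Set.nonempty_iff_ne_empty]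
      intro h; rw [h] at hE2; exact hE2 Set.countable_empty
    obtain ⟨x₁, hx₁⟩ := hEne
    obtain ⟨hx₁S, hx₁a, hx₁m, hx₁w⟩ := hEprop x₁ hx₁
    have hMne : ∀ x ∈ E, (Mset X a x).Nonempty := fun x hx =>
      hpairs a haS x (hEprop x hx).1 (Ne.symm (hEprop x hx).2.1)
    have hwsome : ∀ c, wbar c = some ((wbar c).iget) := by
      intro c
      have h1 : (X x₁ c).1 γs ≠ none := by
        rw [ne_none_iff_lt_sdom]
        have := (mval_lt_sdom X T (hMne x₁ hx₁) (htupS a haS)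
          (htupS x₁ hx₁S) c).2
        rwa [hx₁m] at this
      rw [← hx₁w c]
      rcases Option.eq_none_or_eq_some ((X x₁ c).1 γs) with h2 | ⟨bb, h2⟩
      · exact absurd h2 h1
      · rw [h2]
    refine common a j' γs (fun c => (wbar c).iget) E (hsub haS) hj'card hgj
      (fun x hx => (hEprop x hx).1) hE2
      (fun c => Gset_lt X T (htupS a haS) hγsG c) ?_ ?_ ?_
    · -- agreement below γs with y = a
      intro x hx γ hγ c
      obtain ⟨hxS, hxa, hxm, _⟩ := hEprop x hx
      have hγm : γ < mval X a x := by rw [hxm]; exact hγ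
      have hsa : γ < sdom (X a c) := hγ.trans (Gset_lt X T (htupS a haS) hγsG c)
      have hsx : γ < sdom (X x c) := by
        have := (mval_lt_sdom X T (hMne x hx) (htupS a haS) (htupS x hxS) c).2
        rw [hxm] at this
        exact hγ.trans this
      exact (lt_mval_eq X hγm c hsa hsx).symm
    · intro x hx c
      rw [(hEprop x hx).2.2.2 c, hwsome c]
    · intro i hi
      have := hlep x₁ hx₁S hx₁a i hi
      rwa [hx₁m] at this
  · -- gate coming from `Gset x`
    have hc0 : Fin n := ⟨0, hn⟩
    have hIc : (Set.Iio (sdom (X a ⟨0, hn⟩))).Countable :=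
      countable_Iio_of_lt_omega1 (hht _ ((htupS a haS).1 ⟨0, hn⟩))
    obtain ⟨γs, hγsI, hE1⟩ := fiber_uncountable_set hD2 (mval X a) _ hIc
      (fun x hx => (mval_lt_sdom X T
        (hpairs a haS x hx.1 (Ne.symm hx.2.1.1)) (htupS a haS) (htupS x hx.1) ⟨0, hn⟩).1)
    set f2 : Ordinal → ℕ := fun x =>
      if h : ∃ j', j' < k ∧ gfun X x j' = γs then h.choose else 0 with hf2
    obtain ⟨j', hE2⟩ := fiber_uncountable hE1 f2
    obtain ⟨wbar, hE3⟩ := fiber_uncountable hE2 (fun x => (fun c => (X x c).1 γs))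
    set E := {x | x ∈ {x | x ∈ {x | x ∈ {x | x ∈ S' ∧ Dpair X a x ∧ mval X a x ∈ Gset X x} ∧
      mval X a x = γs} ∧ f2 x = j'} ∧ (fun c => (X x c).1 γs) = wbar} with hE
    have hEprop : ∀ x ∈ E, x ∈ S' ∧ x ≠ a ∧ mval X a x = γs ∧ γs ∈ Gset X x ∧
        f2 x = j' ∧ ∀ c, (X x c).1 γs = wbar c := by
      rintro x ⟨⟨⟨⟨hxS, hxD, hxG⟩, hxm⟩, hxf⟩, hxw⟩
      refine ⟨hxS, hxD.1, hxm, by rwa [hxm] at hxG, hxf, fun c => congrFun hxw c⟩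
    have hEne : E.Nonempty := by
      rw [Set.nonempty_iff_ne_empty]
      intro h; rw [h] at hE3; exact hE3 Set.countable_empty
    obtain ⟨x₁, hx₁⟩ := hEne
    obtain ⟨hx₁S, hx₁a, hx₁m, hx₁G, hx₁f, hx₁w⟩ := hEprop x₁ hx₁
    have hMne : ∀ x ∈ E, (Mset X a x).Nonempty := fun x hx =>
      hpairs a haS x (hEprop x hx).1 (Ne.symm (hEprop x hx).2.1)
    have hgexists : ∀ x ∈ E, ∃ j'', j'' < k ∧ gfun X x j'' = γs := by
      intro x hx
      obtain ⟨hxS, hxa, hxm, hxG, hxf, hxw⟩ := hEprop x hx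
      have hfin : (Gset X x).Finite := Gset_finite X T hcoh (htupS x hxS)
      obtain ⟨j'', hj''c, hj''g⟩ := exists_gfun X ((mem_Gfin X hfin γs).2 hxG)
      rw [hS₀k x (hsub hxS)] at hj''c
      exact ⟨j'', hj''c, hj''g⟩
    have hf2good : ∀ x ∈ E, j' < k ∧ gfun X x j' = γs := by
      intro x hx
      have hex := hgexists x hx
      have : f2 x = hex.choose := by rw [hf2]; exact dif_pos hex
      have hspec := hex.choose_spec
      rw [← this] at hspec
      rw [(hEprop x hx).2.2.2.2.1] at hspec
      exact hspec
    have hwsome : ∀ c, wbar c = some ((wbar c).iget) := by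
      intro c
      have h1 : (X x₁ c).1 γs ≠ none := by
        rw [ne_none_iff_lt_sdom]
        have := (mval_lt_sdom X T (hMne x₁ hx₁) (htupS a haS)
          (htupS x₁ hx₁S) c).2
        rwa [hx₁m] at this
      rw [← hx₁w c]
      rcases Option.eq_none_or_eq_some ((X x₁ c).1 γs) with h2 | ⟨bb, h2⟩
      · exact absurd h2 h1
      · rw [h2]
    refine common x₁ j' γs (fun c => (wbar c).iget) E (hsub hx₁S)
      (hf2good x₁ hx₁).1 (hf2good x₁ hx₁).2
      (fun x hx => (hEprop x hx).1) hE3 ?_ ?_ ?_ ?_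
    · intro c
      have := (mval_lt_sdom X T (hMne x₁ hx₁) (htupS a haS) (htupS x₁ hx₁S) c).2
      rwa [hx₁m] at this
    · intro x hx γ hγ c
      obtain ⟨hxS, hxa, hxm, _, _, _⟩ := hEprop x hx
      have hsa : γ < sdom (X a c) := by
        have := (mval_lt_sdom X T (hMne x hx) (htupS a haS) (htupS x hxS) c).1
        rw [hxm] at this
        exact hγ.trans this
      have hsx : γ < sdom (X x c) := by
        have := (mval_lt_sdom X T (hMne x hx) (htupS a haS) (htupS x hxS) c).2
        rw [hxm] at this
        exact hγ.trans this
      have hsx₁ : γ < sdom (X x₁ c) := by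
        have := (mval_lt_sdom X T (hMne x₁ hx₁) (htupS a haS) (htupS x₁ hx₁S) c).2
        rw [hx₁m] at this
        exact hγ.trans this
      have e1 : (X a c).1 γ = (X x c).1 γ := by
        apply lt_mval_eq X (by rw [hxm]; exact hγ) c hsa hsx
      have e2 : (X a c).1 γ = (X x₁ c).1 γ := by
        apply lt_mval_eq X (by rw [hx₁m]; exact hγ) c hsa hsx₁
      rw [← e1, e2]
    · intro x hx c
      rw [(hEprop x hx).2.2.2.2.2 c, hwsome c]
    · intro i hi
      have := hlep x₁ hx₁S hx₁a i hi
      rwa [hx₁m] at this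


end core
end S6

/-- Let `T` be a special coherent Aronszajn tree, `n > 0`, and let
`{X_a : a ∈ ω₁}` be a family of members of `T^⊗n` such that for `a ≠ b` no coordinate
of `X_a` equals a coordinate of `X_b`.  Then there is an uncountable `B ⊆ ω₁` such
that for all `a < b` in `B`, every coordinate of `X_a` is incomparable with every
coordinate of `X_b`, and for all `i < j < n`,
`Δ(X_a(i), X_b(i)) = Δ(X_a(j), X_b(j))`. -/
theorem stmt6 (T : Set BSeq) (hT : SpecialCoherentAronszajn T) (n : ℕ) (hn : 0 < n)
    (X : Ordinal → Fin n → BSeq)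
    (hX : ∀ a < omega1, TupleIn T n (X a))
    (hdisj : ∀ a < omega1, ∀ b < omega1, a ≠ b → ∀ i j : Fin n, X a i ≠ X b j) :
    ∃ B : Set Ordinal, B ⊆ Set.Iio omega1 ∧ ¬B.Countable ∧
      ∀ a ∈ B, ∀ b ∈ B, a < b →
        (∀ i j : Fin n, Incomp (X a i) (X b j)) ∧
        (∀ i j : Fin n, i < j → sDelta (X a i) (X b i) = sDelta (X a j) (X b j)) := by
  classical
  obtain ⟨hdc, hcoh, hht, -, -, -, A, hA, hTA⟩ := hT
  obtain ⟨idx, hidx⟩ : ∃ idx : BSeq → ℕ, ∀ s ∈ T, s ∈ A (idx s) := by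
    refine ⟨fun s => if h : s ∈ T then (Set.mem_iUnion.1 (hTA h)).choose else 0,
      fun s hs => ?_⟩
    simp only [dif_pos hs]
    exact (Set.mem_iUnion.1 (hTA hs)).choose_spec
  have hIio : ¬ (Set.Iio omega1).Countable := S6.not_countable_Iio_omega1
  obtain ⟨v, hS1unc⟩ := S6.fiber_uncountable hIio (fun a => (fun c : Fin n => idx (X a c)))
  set S1 := {x | x ∈ Set.Iio omega1 ∧ (fun c : Fin n => idx (X x c)) = v} with hS1def
  obtain ⟨k, hS2unc⟩ := S6.fiber_uncountable hS1unc (fun a => (S6.Gfin X a).card)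
  set S2 := {x | x ∈ S1 ∧ (S6.Gfin X x).card = k} with hS2def
  obtain ⟨Mf, hS3unc⟩ := S6.fiber_uncountable hS2unc
    (fun a => (fun (j : Fin k) (w : Fin n → Bool) (c : Fin n) => S6.Mfun X T idx a j.1 w c))
  set S₀ := {x | x ∈ S2 ∧
    (fun (j : Fin k) (w : Fin n → Bool) (c : Fin n) => S6.Mfun X T idx x j.1 w c) = Mf}
    with hS₀def
  set M' : ℕ → (Fin n → Bool) → Fin n → Option ℕ :=
    fun j w c => if h : j < k then Mf ⟨j, h⟩ w c else none with hM'def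
  have hS₀sub : S₀ ⊆ Set.Iio omega1 := fun a ha => ha.1.1.1
  have hS₀v : ∀ a ∈ S₀, ∀ b ∈ S₀, idx (X a ⟨0, hn⟩) = idx (X b ⟨0, hn⟩) := by
    intro a ha b hb
    have h1 : idx (X a ⟨0, hn⟩) = v ⟨0, hn⟩ := congrFun ha.1.1.2 _
    have h2 : idx (X b ⟨0, hn⟩) = v ⟨0, hn⟩ := congrFun hb.1.1.2 _
    rw [h1, h2]
  have hS₀k : ∀ a ∈ S₀, (S6.Gfin X a).card = k := fun a ha => ha.1.2
  have hS₀M : ∀ a ∈ S₀, ∀ j' < k, ∀ (w : Fin n → Bool) (c : Fin n),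
      S6.Mfun X T idx a j' w c = M' j' w c := by
    intro a ha j' hj' w c
    have := congrFun (congrFun (congrFun ha.2 ⟨j', hj'⟩) w) c
    rw [hM'def]
    simp only [dif_pos hj']
    exact this
  have hind : ∀ l : ℕ, S6.GoalP X ∨ S6.Cfg X T idx k M' S₀ l := by
    intro l
    induction l with
    | zero =>
      right
      refine ⟨S₀, fun _ c => X 0 c, fun _ => (0, fun _ => false), fun _ => 0,
        le_refl _, hS3unc, ?_, ?_, ?_, ?_, ?_, ?_⟩
      · intro i hi; exact absurd hi (Nat.not_lt_zero i)
      · intro i hi; exact absurd hi (Nat.not_lt_zero i)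
      · intro i hi; exact absurd hi (Nat.not_lt_zero i)
      · intro i j _ hj; exact absurd hj (Nat.not_lt_zero j)
      · intro i hi; exact absurd hi (Nat.not_lt_zero i)
      · intro b _ i hi; exact absurd hi (Nat.not_lt_zero i)
    | succ l ih =>
      rcases ih with h | h
      · exact Or.inl h
      · exact S6.cfg_step X T idx A k M' hn hdc hcoh hA hidx hht hX hdisj
          hS₀sub hS₀v hS₀k hS₀M l h
  rcases hind (k * 2 ^ n + 1) with h | h
  · obtain ⟨B, h1, h2, h3⟩ := h
    exact ⟨B, h1, h2, h3⟩
  · exact absurd h (fun hh => S6.cfg_contra X T idx A k M' hn hA hidx hh)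


end
end

section
/- Let T be a special coherent Aronszajn tree, let K ⊆ T, let n be a positive natural number, and suppose U is a subtree of T^⊗n which is contained in some member of 𝓡_n. Then there exists a subtree S ⊆ U such that, letting Z = {Y(0) : Y ∈ S}, for every X ∈ S we have Δ(Z, X(0)) ∩ K(X) = ∅; in particular, S ⊆ R^n_Z. -/
noncomputable section

namespace Stmt8

lemma isSome_iff (f : BSeq) (γ : Ordinal) : (f.1 γ).isSome ↔ γ < sdom f := by
  obtain ⟨β, hβ⟩ := f.2
  have hs : sdom f = β := by
    unfold sdom
    have h1 : {γ : Ordinal | f.1 γ = none} = Set.Ici β := by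
      ext γ
      simp only [Set.mem_setOf_eq, Set.mem_Ici, ← Option.not_isSome_iff_eq_none, hβ, not_lt]
    rw [h1, csInf_Ici]
  rw [hs]; exact hβ γ

lemma none_iff (f : BSeq) (γ : Ordinal) : f.1 γ = none ↔ sdom f ≤ γ := by
  rw [← Option.not_isSome_iff_eq_none, isSome_iff, not_lt]

lemma sle_refl (f : BSeq) : sle f f := fun _ _ => rfl

lemma sle_trans {f g h : BSeq} (h1 : sle f g) (h2 : sle g h) : sle f h := by
  intro γ hγ
  rw [h2 γ (by rw [h1 γ hγ]; exact hγ), h1 γ hγ]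

lemma sle_eq {f g : BSeq} (h : sle f g) {γ : Ordinal} (hγ : γ < sdom f) : g.1 γ = f.1 γ := by
  apply h
  rw [Ne, none_iff, not_le]; exact hγ

lemma sle_sdom {f g : BSeq} (h : sle f g) : sdom f ≤ sdom g := by
  by_contra hlt
  push_neg at hlt
  have h1 : g.1 (sdom g) = f.1 (sdom g) := sle_eq h hlt
  have h2 : g.1 (sdom g) = none := (none_iff g _).2 le_rfl
  have h3 : f.1 (sdom g) ≠ none := by rw [Ne, none_iff, not_le]; exact hlt
  exact h3 (h1 ▸ h2)

lemma srestrict_apply (f : BSeq) (β γ : Ordinal) :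
    (srestrict f β).1 γ = if γ < β then f.1 γ else none := rfl

lemma sdom_eq {f : BSeq} {β : Ordinal} (h : ∀ γ, (f.1 γ).isSome ↔ γ < β) : sdom f = β := by
  rcases lt_trichotomy (sdom f) β with h1 | h1 | h1
  · have := (h (sdom f)).2 h1
    rw [isSome_iff] at this
    exact absurd this (lt_irrefl _)
  · exact h1
  · have := (isSome_iff f β).2 h1
    rw [h β] at this
    exact absurd this (lt_irrefl _)

lemma sdom_srestrict (f : BSeq) (β : Ordinal) : sdom (srestrict f β) = min β (sdom f) := by
  apply sdom_eq
  intro γ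
  rw [srestrict_apply]
  by_cases h : γ < β
  · simp [h, isSome_iff, lt_min_iff]
  · simp [h, lt_min_iff]

lemma sle_srestrict (f : BSeq) (β : Ordinal) : sle (srestrict f β) f := by
  intro γ hγ
  rw [srestrict_apply] at hγ ⊢
  by_cases h : γ < β
  · simp [h]
  · simp [h] at hγ

lemma srestrict_eq_of_sle {f g : BSeq} (h : sle f g) : srestrict g (sdom f) = f := by
  apply Subtype.ext
  funext γ
  rw [srestrict_apply]
  by_cases hγ : γ < sdom f
  · rw [if_pos hγ]; exact sle_eq h hγ
  · rw [if_neg hγ, eq_comm, none_iff]; exact not_lt.1 hγ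

lemma srestrict_eq_srestrict {f g : BSeq} (h : sle f g) {β : Ordinal} (hβ : β ≤ sdom f) :
    srestrict f β = srestrict g β := by
  apply Subtype.ext
  funext γ
  rw [srestrict_apply, srestrict_apply]
  by_cases hγ : γ < β
  · rw [if_pos hγ, if_pos hγ, sle_eq h (hγ.trans_le hβ)]
  · rw [if_neg hγ, if_neg hγ]

/-- The set of places where `f` and `g` both are defined and differ. -/
def dset (f g : BSeq) : Set Ordinal :=
  {γ : Ordinal | (f.1 γ).isSome ∧ (g.1 γ).isSome ∧ f.1 γ ≠ g.1 γ}

lemma sle_of_dset_empty {f g : BSeq} (h : dset f g = ∅) (hd : sdom f ≤ sdom g) : sle f g := by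
  intro γ hγ
  have h1 : γ < sdom f := lt_of_not_ge (fun hle => hγ ((none_iff f γ).2 hle))
  by_contra hne
  have : γ ∈ dset f g := ⟨(isSome_iff f γ).2 h1, (isSome_iff g γ).2 (h1.trans_le hd),
    fun he => hne he.symm⟩
  rw [h] at this
  exact this

lemma dset_nonempty_of_incomp {f g : BSeq} (h : Incomp f g) : (dset f g).Nonempty := by
  rw [Set.nonempty_iff_ne_empty]
  intro he
  rcases le_total (sdom f) (sdom g) with hd | hd
  · exact h.1 (sle_of_dset_empty he hd)
  · refine h.2 (sle_of_dset_empty ?_ hd)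
    rw [← he]
    ext γ
    simp only [dset, Set.mem_setOf_eq]
    tauto

lemma incomp_of_mem_dset {f g : BSeq} {δ : Ordinal} (h : δ ∈ dset f g) : Incomp f g := by
  obtain ⟨h1, h2, h3⟩ := h
  constructor
  · intro hle
    exact h3 (hle δ (by simpa [Option.ne_none_iff_isSome] using h1)).symm
  · intro hle
    exact h3 (hle δ (by simpa [Option.ne_none_iff_isSome] using h2))

lemma sDelta_mem {f g : BSeq} (h : (dset f g).Nonempty) : sDelta f g ∈ dset f g := csInf_mem h

lemma sDelta_le {f g : BSeq} {γ : Ordinal} (h : γ ∈ dset f g) : sDelta f g ≤ γ := csInf_le' h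

lemma sDelta_eq_of {f g : BSeq} {δ : Ordinal} (hδ : δ ∈ dset f g)
    (hmin : ∀ γ < δ, γ ∉ dset f g) : sDelta f g = δ := by
  refine le_antisymm (sDelta_le hδ) (le_csInf ⟨δ, hδ⟩ ?_)
  intro γ hγ
  by_contra hlt
  exact hmin γ (not_le.1 hlt) hγ

end Stmt8

namespace Stmt8

lemma omega1_isLimit : Order.IsSuccLimit omega1 := Cardinal.isSuccLimit_ord (Cardinal.aleph0_le_aleph 1)

lemma succ_lt_omega1 {β : Ordinal} (hβ : β < omega1) : β + 1 < omega1 := by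
  rw [Ordinal.add_one_eq_succ]
  exact omega1_isLimit.succ_lt hβ

lemma countable_Iio {β : Ordinal} (hβ : β < omega1) : (Set.Iio β).Countable := by
  rw [Cardinal.countable_iff_lt_aleph_one, Ordinal.mk_Iio_ordinal, Cardinal.lift_lt_aleph_one]
  exact Cardinal.lt_ord.1 hβ

lemma countable_Iic {β : Ordinal} (hβ : β < omega1) : (Set.Iic β).Countable := by
  refine (countable_Iio (succ_lt_omega1 hβ)).mono ?_
  intro γ hγ
  exact lt_of_le_of_lt hγ (lt_add_one β)

lemma sup_seq_lt_omega1 (f : ℕ → Ordinal) (h : ∀ k, f k < omega1) : (⨆ k, f k) < omega1 :=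
  by unfold omega1 at h ⊢; rw [Cardinal.ord_aleph] at h ⊢; exact Ordinal.iSup_lt_omega_one h

lemma lt_iSup_nat {f : ℕ → Ordinal} {γ : Ordinal} (h : γ < ⨆ k, f k) : ∃ k, γ < f k := by
  by_contra hc
  push_neg at hc
  exact absurd (ciSup_le' hc) (not_le.2 h)

end Stmt8

namespace Stmt8

lemma sSup_countable_lt_omega1 {s : Set Ordinal} (hs : s.Countable)
    (hlt : ∀ γ ∈ s, γ < omega1) : sSup s < omega1 := by
  rcases s.eq_empty_or_nonempty with rfl | hne
  · rw [csSup_empty]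
    exact omega1_isLimit.pos
  · obtain ⟨f, rfl⟩ := hs.exists_eq_range hne
    rw [sSup_range]
    exact sup_seq_lt_omega1 f (fun k => hlt _ (Set.mem_range_self k))

lemma fodor_lite (F : Set.Iio omega1 → Set Ordinal)
    (hfin : ∀ α, (F α).Finite) (hsub : ∀ α, F α ⊆ Set.Iio (α : Ordinal)) :
    ∃ ν, ν < omega1 ∧ ¬ {α : Set.Iio omega1 | F α ⊆ Set.Iio ν}.Countable := by
  by_contra hcon
  push_neg at hcon
  set B : Ordinal → Set (Set.Iio omega1) :=
    fun ν => {α : Set.Iio omega1 | F α ⊆ Set.Iio ν} with hB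
  have hc : ∀ ν, ν < omega1 → (B ν).Countable := hcon
  set h : Ordinal → Ordinal :=
    fun ν => sSup ((fun (α : Set.Iio omega1) => (α : Ordinal) + 1) '' B ν) with hh
  have himg : ∀ ν, ∀ γ ∈ (fun (α : Set.Iio omega1) => (α : Ordinal) + 1) '' B ν, γ < omega1 := by
    rintro ν γ ⟨α, _, rfl⟩
    exact succ_lt_omega1 α.2
  have hhlt : ∀ ν, ν < omega1 → h ν < omega1 := by
    intro ν hν
    exact sSup_countable_lt_omega1 ((hc ν hν).image _) (himg ν)
  have hmem : ∀ ν (α : Set.Iio omega1), α ∈ B ν → (α : Ordinal) + 1 ≤ h ν := by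
    intro ν α hα
    refine le_csSup ⟨omega1, ?_⟩ (Set.mem_image_of_mem _ hα)
    rintro γ ⟨α', _, rfl⟩
    exact le_of_lt (succ_lt_omega1 α'.2)
  obtain ⟨β, hβ0, hβs⟩ : ∃ β : ℕ → Ordinal, β 0 = 0 ∧
      ∀ k, β (k + 1) = max (h (β k)) (β k + 1) :=
    ⟨fun k => Nat.rec 0 (fun _ ih => max (h ih) (ih + 1)) k, rfl, fun _ => rfl⟩
  have hβlt : ∀ k, β k < omega1 := by
    intro k
    induction k with
    | zero => rw [hβ0]; exact omega1_isLimit.pos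
    | succ k ih => rw [hβs]; exact max_lt (hhlt _ ih) (succ_lt_omega1 ih)
  set μ : Ordinal := ⨆ k, β k with hμ
  have hμlt : μ < omega1 := sup_seq_lt_omega1 β hβlt
  have hle : ∀ k, β k ≤ μ := fun k => le_ciSup (Ordinal.bddAbove_range β) k
  have hklt : ∀ k, β k < μ := by
    intro k
    refine lt_of_lt_of_le ?_ (hle (k + 1))
    rw [hβs]
    exact lt_of_lt_of_le (lt_add_one _) (le_max_right _ _)
  set αμ : Set.Iio omega1 := ⟨μ, hμlt⟩ with hαμ
  obtain ⟨k, hk⟩ : ∃ k, F αμ ⊆ Set.Iio (β k) := by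
    rcases (F αμ).eq_empty_or_nonempty with he | hne
    · exact ⟨0, by rw [he]; exact Set.empty_subset _⟩
    · have hmemF : sSup (F αμ) ∈ F αμ := hne.csSup_mem (hfin αμ)
      have : sSup (F αμ) < μ := hsub αμ hmemF
      obtain ⟨k, hk⟩ := lt_iSup_nat this
      refine ⟨k, fun γ hγ => ?_⟩
      exact lt_of_le_of_lt (le_csSup (hfin αμ).bddAbove hγ) hk
  have h1 : μ + 1 ≤ h (β k) := hmem (β k) αμ hk
  have h2 : h (β k) ≤ β (k + 1) := by rw [hβs]; exact le_max_left _ _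
  have := lt_of_lt_of_le (lt_add_one μ) (le_trans h1 (le_trans h2 (hle (k + 1))))
  exact lt_irrefl μ this

end Stmt8

namespace Stmt8

lemma heights_unbounded {T : Set BSeq} (hT : SpecialCoherentAronszajn T)
    {n : ℕ} (hn : 0 < n) {U : Set (Fin n → BSeq)} (hU : IsProdSubtree T n U)
    {β : Ordinal} (hβ : β < omega1) : ∃ X ∈ U, β ≤ sdom (X ⟨0, hn⟩) := by
  by_contra hcon
  push_neg at hcon
  set LE : Set BSeq := {s | s ∈ T ∧ sdom s < β} with hLE
  have hLEc : LE.Countable := by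
    have hsub : LE ⊆ ⋃ γ ∈ Set.Iio β, {s : BSeq | s ∈ T ∧ sdom s = γ} := by
      rintro s ⟨hsT, hsd⟩
      exact Set.mem_biUnion hsd ⟨hsT, rfl⟩
    exact (Set.Countable.biUnion (countable_Iio hβ)
      (fun γ _ => hT.2.2.2.2.1 γ)).mono hsub
  have hUc : U.Countable := by
    refine (Set.countable_pi (fun _ : Fin n => hLEc)).mono ?_
    intro X hX
    intro i
    have h1 := hU.1 X hX
    exact ⟨h1.1 i, by rw [h1.2 i ⟨0, hn⟩]; exact hcon X hX⟩
  exact hU.2.1 hUc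

lemma restrict_tuple_mem {T : Set BSeq} (hT : SpecialCoherentAronszajn T)
    {n : ℕ} {U : Set (Fin n → BSeq)} (hU : IsProdSubtree T n U)
    {X : Fin n → BSeq} (hX : X ∈ U) (β : Ordinal) :
    (fun i => srestrict (X i) β) ∈ U := by
  have h1 := hU.1 X hX
  refine hU.2.2 _ X ⟨fun i => hT.1 _ (h1.1 i) _ (sle_srestrict _ _), fun i j => by
    rw [sdom_srestrict, sdom_srestrict, h1.2 i j]⟩ (fun i => sle_srestrict _ _) hX

end Stmt8


open Stmt8

/-- Let `T` be a special coherent Aronszajn tree, `K ⊆ T`, `n > 0`, and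
suppose `U` is a subtree of `T^⊗n` contained in some member of `𝓡_n`.  Then there is
a subtree `S ⊆ U` such that, letting `Z = {Y(0) : Y ∈ S}`, every `X ∈ S` satisfies
`Δ(Z, X(0)) ∩ K(X) = ∅`; in particular `S ⊆ R^n_Z`. -/
theorem stmt8 (T : Set BSeq) (hT : SpecialCoherentAronszajn T) (K : Set BSeq)
    (hK : K ⊆ T) (n : ℕ) (hn : 0 < n)
    (U : Set (Fin n → BSeq)) (hU : IsProdSubtree T n U)
    (hUR : ∃ R ∈ Rfam K T n, U ⊆ R) :
    ∃ S : Set (Fin n → BSeq), IsProdSubtree T n S ∧ S ⊆ U ∧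
      (∀ X ∈ S,
        sDeltaSet {z : BSeq | ∃ Y ∈ S, Y ⟨0, hn⟩ = z} (X ⟨0, hn⟩) ∩ KX K X = ∅) ∧
      S ⊆ RnZ K T n {z : BSeq | ∃ Y ∈ S, Y ⟨0, hn⟩ = z} := by
  classical
  set i0 : Fin n := ⟨0, hn⟩ with hi0
  obtain ⟨R, hRfam, hURsub⟩ := hUR
  obtain ⟨hRtree, Z₀, hZ₀T, hZ₀unc, hReq⟩ := hRfam
  subst hReq
  -- Choose, for each countable ordinal α, a tuple in U of height exactly α
  -- together with its witness data coming from `U ⊆ R^n_{Z₀}`.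
  have hex : ∀ α : Set.Iio omega1, ∃ (X : Fin n → BSeq) (t z : BSeq),
      X ∈ U ∧ (∀ i, sdom (X i) = (α : Ordinal)) ∧
      z ∈ Z₀ ∧ sle t z ∧ (∀ i, sdom t = sdom (X i)) ∧
      sDeltaSet Z₀ t ∩ KX K X = ∅ := by
    intro α
    obtain ⟨X', hX'U, hX'ht⟩ := heights_unbounded hT hn hU α.2
    set X : Fin n → BSeq := fun i => srestrict (X' i) α with hX
    have hXU : X ∈ U := restrict_tuple_mem hT hU hX'U α
    have htup := hU.1 X' hX'U
    have hht : ∀ i, sdom (X i) = (α : Ordinal) := by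
      intro i
      rw [hX]
      simp only []
      rw [sdom_srestrict, min_eq_left]
      rw [htup.2 i ⟨0, hn⟩]
      exact hX'ht
    have hXR : X ∈ RnZ K T n Z₀ := hURsub hXU
    obtain ⟨-, tt, ⟨zz, hzz, htzz⟩, htdd, htss⟩ := hXR
    exact ⟨X, tt, zz, hXU, hht, hzz, htzz, htdd, htss⟩
  choose X t z hXU hXht hzZ htz htd hts using hex
  have htT : ∀ α, t α ∈ T := fun α => hT.1 _ (hZ₀T (hzZ α)) _ (htz α)
  have hXT : ∀ α i, X α i ∈ T := fun α i => (hU.1 _ (hXU α)).1 i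
  have htdom : ∀ α, sdom (t α) = (α : Ordinal) := fun α => (htd α i0).trans (hXht α i0)
  -- the finite difference sets
  set F : Set.Iio omega1 → Set Ordinal := fun α => dset (X α i0) (t α) with hF
  have hFfin : ∀ α, (F α).Finite := fun α => hT.2.1 _ (hXT α i0) _ (htT α)
  have hFsub : ∀ α, F α ⊆ Set.Iio (α : Ordinal) := by
    rintro α γ ⟨h1, -, -⟩
    rw [isSome_iff, hXht α i0] at h1
    exact h1
  obtain ⟨ν, hνlt, hBν⟩ := fodor_lite F hFfin hFsub
  -- pigeonhole on the restrictions to level ν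
  set g : Set.Iio omega1 → BSeq × BSeq :=
    fun α => (srestrict (X α i0) ν, srestrict (t α) ν) with hg
  set LE : Set BSeq := {s | s ∈ T ∧ sdom s ≤ ν} with hLE
  have hLEc : LE.Countable := by
    have hsub : LE ⊆ ⋃ γ ∈ Set.Iic ν, {s : BSeq | s ∈ T ∧ sdom s = γ} := by
      rintro s ⟨hsT, hsd⟩
      exact Set.mem_biUnion hsd ⟨hsT, rfl⟩
    exact (Set.Countable.biUnion (countable_Iic hνlt)
      (fun γ _ => hT.2.2.2.2.1 γ)).mono hsub
  have hpig : ∃ p : BSeq × BSeq,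
      ¬ {α : Set.Iio omega1 | F α ⊆ Set.Iio ν ∧ g α = p}.Countable := by
    by_contra hcp
    push_neg at hcp
    apply hBν
    have hsub2 : {α : Set.Iio omega1 | F α ⊆ Set.Iio ν} ⊆
        ⋃ p ∈ LE ×ˢ LE, {α : Set.Iio omega1 | F α ⊆ Set.Iio ν ∧ g α = p} := by
      intro α hα
      refine Set.mem_biUnion (?_ : g α ∈ LE ×ˢ LE) ⟨hα, rfl⟩
      constructor
      · exact ⟨hT.1 _ (hXT α i0) _ (sle_srestrict _ _),
          by rw [sdom_srestrict]; exact min_le_left _ _⟩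
      · exact ⟨hT.1 _ (htT α) _ (sle_srestrict _ _),
          by rw [sdom_srestrict]; exact min_le_left _ _⟩
    exact ((hLEc.prod hLEc).biUnion (fun p _ => hcp p)).mono hsub2
  obtain ⟨⟨σ, τ⟩, hS₂c⟩ := hpig
  set S₂ : Set (Set.Iio omega1) :=
    {α : Set.Iio omega1 | F α ⊆ Set.Iio ν ∧ g α = (σ, τ)} with hS₂
  -- agreement below ν
  have hXσ : ∀ α ∈ S₂, srestrict (X α i0) ν = σ := fun α hα => congrArg Prod.fst hα.2
  have htτ : ∀ α ∈ S₂, srestrict (t α) ν = τ := fun α hα => congrArg Prod.snd hα.2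
  have hXagree : ∀ α ∈ S₂, ∀ β ∈ S₂, ∀ γ < ν, (X α i0).1 γ = (X β i0).1 γ := by
    intro α hα β hβ γ hγ
    have h1 := congrFun (congrArg Subtype.val ((hXσ α hα).trans (hXσ β hβ).symm)) γ
    rwa [srestrict_apply, srestrict_apply, if_pos hγ, if_pos hγ] at h1
  have htagree : ∀ α ∈ S₂, ∀ β ∈ S₂, ∀ γ < ν, (t α).1 γ = (t β).1 γ := by
    intro α hα β hβ γ hγ
    have h1 := congrFun (congrArg Subtype.val ((htτ α hα).trans (htτ β hβ).symm)) γ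
    rwa [srestrict_apply, srestrict_apply, if_pos hγ, if_pos hγ] at h1
  -- the subtree S
  set S : Set (Fin n → BSeq) :=
    {Y | TupleIn T n Y ∧ ∃ α ∈ S₂, ∀ i, sle (Y i) (X α i)} with hS
  have hXS : ∀ α ∈ S₂, X α ∈ S :=
    fun α hα => ⟨hU.1 _ (hXU α), α, hα, fun i => sle_refl _⟩
  have hStree : IsProdSubtree T n S := by
    refine ⟨fun Y hY => hY.1, ?_, ?_⟩
    · intro hSc
      apply hS₂c
      have hinj : Function.Injective X := by
        intro α β hαβ
        apply Subtype.ext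
        rw [← hXht α i0, ← hXht β i0, hαβ]
      refine (hSc.preimage hinj).mono ?_
      intro α hα
      exact hXS α hα
    · rintro Y Y' hYtup hle ⟨hY'tup, α, hα, hY'le⟩
      exact ⟨hYtup, α, hα, fun i => sle_trans (hle i) (hY'le i)⟩
  have hSU : S ⊆ U := by
    rintro Y ⟨hYtup, α, hα, hYle⟩
    exact hU.2.2 Y (X α) hYtup hYle (hXU α)
  -- the main property
  have hmain : ∀ Xx ∈ S,
      sDeltaSet {w : BSeq | ∃ Y ∈ S, Y i0 = w} (Xx i0) ∩ KX K Xx = ∅ := by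
    intro Xx hXxS
    rw [Set.eq_empty_iff_forall_notMem]
    rintro γ ⟨hγΔ, hγK⟩
    obtain ⟨s, hsZ, hsInc, hsδ⟩ := hγΔ
    obtain ⟨Y, hYS, rfl⟩ := hsZ
    obtain ⟨hYtup, α, hαS₂, hYle⟩ := hYS
    obtain ⟨hXxtup, β, hβS₂, hXxle⟩ := hXxS
    -- notation
    have hYr : Y i0 = srestrict (X α i0) (sdom (Y i0)) :=
      (srestrict_eq_of_sle (hYle i0)).symm
    have hXxr : Xx i0 = srestrict (X β i0) (sdom (Xx i0)) :=
      (srestrict_eq_of_sle (hXxle i0)).symm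
    have hγmem : γ ∈ dset (Y i0) (Xx i0) := by
      rw [← hsδ]
      exact sDelta_mem (dset_nonempty_of_incomp hsInc)
    obtain ⟨hs1, hs2, hs3⟩ := hγmem
    have hγ1 : γ < sdom (Y i0) := (isSome_iff _ _).1 hs1
    have hγ0 : γ < sdom (Xx i0) := (isSome_iff _ _).1 hs2
    have hvalY : (Y i0).1 γ = (X α i0).1 γ := by
      rw [hYr, srestrict_apply, if_pos hγ1]
    have hvalX : (Xx i0).1 γ = (X β i0).1 γ := by
      rw [hXxr, srestrict_apply, if_pos hγ0]
    have hγα : γ < (α : Ordinal) := by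
      rw [← hXht α i0]
      exact lt_of_lt_of_le hγ1 (sle_sdom (hYle i0))
    have hγβ : γ < (β : Ordinal) := by
      rw [← hXht β i0]
      exact lt_of_lt_of_le hγ0 (sle_sdom (hXxle i0))
    have hne : (X α i0).1 γ ≠ (X β i0).1 γ := by
      rw [← hvalY, ← hvalX]; exact hs3
    -- γ is at least ν
    have hνγ : ν ≤ γ := by
      by_contra hlt
      push_neg at hlt
      exact hne (hXagree α hαS₂ β hβS₂ γ hlt)
    -- values of the witnesses at γ
    have hsomeα : ((X α i0).1 γ).isSome := (isSome_iff _ _).2 (by rwa [hXht α i0])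
    have hsomeβ : ((X β i0).1 γ).isSome := (isSome_iff _ _).2 (by rwa [hXht β i0])
    have hnotFα : ∀ γ', ν ≤ γ' → γ' ∉ F α := fun γ' hγ' hmem =>
      absurd (hαS₂.1 hmem) (not_lt.2 hγ')
    have hnotFβ : ∀ γ', ν ≤ γ' → γ' ∉ F β := fun γ' hγ' hmem =>
      absurd (hβS₂.1 hmem) (not_lt.2 hγ')
    have htval : ∀ (δ : Set.Iio omega1), ∀ γ' < (δ : Ordinal), ν ≤ γ' → (γ' ∉ F δ) →
        (t δ).1 γ' = (X δ i0).1 γ' := by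
      intro δ γ' hγ'δ hγ'ν hγ'F
      by_contra hd
      exact hγ'F ⟨(isSome_iff _ _).2 (by rwa [hXht δ i0]),
        (isSome_iff _ _).2 (by rwa [htdom δ]), fun he => hd he.symm⟩
    have hzval : ∀ (δ : Set.Iio omega1), ∀ γ' < (δ : Ordinal), (z δ).1 γ' = (t δ).1 γ' := by
      intro δ γ' hγ'δ
      exact sle_eq (htz δ) (by rwa [htdom δ])
    -- γ lies in the difference set of z α and t β
    have hγzt : γ ∈ dset (z α) (t β) := by
      refine ⟨?_, ?_, ?_⟩
      · rw [hzval α γ hγα, htval α γ hγα hνγ (hnotFα γ hνγ)]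
        exact hsomeα
      · rw [htval β γ hγβ hνγ (hnotFβ γ hνγ)]
        exact hsomeβ
      · rw [hzval α γ hγα, htval α γ hγα hνγ (hnotFα γ hνγ),
          htval β γ hγβ hνγ (hnotFβ γ hνγ)]
        exact hne
    -- and it is the least element of that difference set
    have hγmin : ∀ γ' < γ, γ' ∉ dset (z α) (t β) := by
      intro γ' hγ'lt ⟨hw1, hw2, hw3⟩
      have hγ'α : γ' < (α : Ordinal) := hγ'lt.trans hγα
      have hγ'β : γ' < (β : Ordinal) := hγ'lt.trans hγβ
      rw [hzval α γ' hγ'α] at hw3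
      rcases lt_or_ge γ' ν with hc | hc
      · exact hw3 (htagree α hαS₂ β hβS₂ γ' hc)
      · rw [htval α γ' hγ'α hc (hnotFα γ' hc), htval β γ' hγ'β hc (hnotFβ γ' hc)] at hw3
        apply hw3
        -- X α i0 and X β i0 agree strictly below γ
        have h4 : γ' ∉ dset (Y i0) (Xx i0) := by
          have : sDelta (Y i0) (Xx i0) = sInf (dset (Y i0) (Xx i0)) := rfl
          apply notMem_of_lt_csInf'
          rw [← this, hsδ]
          exact hγ'lt
        by_contra hd
        apply h4
        have hy' : (Y i0).1 γ' = (X α i0).1 γ' := by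
          rw [hYr, srestrict_apply, if_pos (hγ'lt.trans hγ1)]
        have hx' : (Xx i0).1 γ' = (X β i0).1 γ' := by
          rw [hXxr, srestrict_apply, if_pos (hγ'lt.trans hγ0)]
        refine ⟨?_, ?_, ?_⟩
        · rw [hy']
          exact (isSome_iff _ _).2 (by rwa [hXht α i0])
        · rw [hx']
          exact (isSome_iff _ _).2 (by rwa [hXht β i0])
        · rw [hy', hx']
          exact hd
    have hδeq : sDelta (z α) (t β) = γ := sDelta_eq_of hγzt hγmin
    -- hence γ ∈ Δ(Z₀, t β)
    have hγΔ₀ : γ ∈ sDeltaSet Z₀ (t β) :=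
      ⟨z α, hzZ α, incomp_of_mem_dset hγzt, hδeq⟩
    -- and γ ∈ K(X β)
    have hγKβ : γ ∈ KX K (X β) := by
      obtain ⟨hd, hk⟩ := hγK
      refine ⟨fun i => by rw [hXht β i]; exact hγβ, fun i => ?_⟩
      have : srestrict (Xx i) γ = srestrict (X β i) γ :=
        srestrict_eq_srestrict (hXxle i) (le_of_lt (by
          rw [← hXxtup.2 i0 i]; exact hγ0))
      rw [← this]
      exact hk i
    have := hts β
    rw [Set.eq_empty_iff_forall_notMem] at this
    exact this γ ⟨hγΔ₀, hγKβ⟩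
  refine ⟨S, hStree, hSU, hmain, ?_⟩
  intro Xx hXxS
  refine ⟨hXxS.1, Xx i0, ⟨Xx i0, ⟨Xx, hXxS, rfl⟩, sle_refl _⟩,
    fun i => hXxS.1.2 i0 i, hmain Xx hXxS⟩


end
end
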